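/- arXiv:1902.01150 — 4 statements merged into one kernel-verified Lean document; each statement's English description precedes it below -/
import Mathlib

section
/- Let m, n ≥ 1, let Y_1, …, Y_m be i.i.d. isotropic log-concave random vectors in ℝ^n, let A = (A_{ij}) be a deterministic m×n real matrix, and set X_{ij} = A_{ij} Y_{ij}. Then for every p, q ≥ 2 there exists a universal constant c > 0 (independent of all parameters) such that 𝔼‖X‖_{p',q} ≥ c [ max_{i≤m} ‖A_i‖_p + max_{j≤n} ‖A^{(j)}‖_q + 𝔼 max_{i≤m, j≤n} |X_{ij}| ]. -/
/-!
Testing `X` against the vector norming the row `X_i` in `ℓ_{p'}`, and against the unit vector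
`e_j`, shows `‖X‖_{p',q} ≥ ‖X_i‖_p`, `‖X‖_{p',q} ≥ ‖X^{(j)}‖_q ≥ max_i |X_ij|`. After taking
expectations, Hölder's inequality against the norming vector of `A_i` (resp. `A^{(j)}`) reduces
the row and column terms to the anticoncentration bound `𝔼|Y_ij| ≥ 1/50`.

That bound holds for every coordinate `W` of an isotropic log-concave vector: the tails
`s ↦ ℙ(±W ≥ s)` are midpoint log-concave, so Markov's inequality at the scale `a = 𝔼|W|`
bootstraps to `ℙ(|W| > 7a·2^k - 3a) ≤ 2^{-2^k}`, whence `1 = 𝔼W² ≤ 1584 a²`.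
-/

open MeasureTheory ProbabilityTheory Real
open scoped Pointwise

noncomputable section

/-- The `ℓ_r` norm of a vector indexed by a finite type. -/
def pNorm {ι : Type*} [Fintype ι] (r : ℝ) (x : ι → ℝ) : ℝ :=
  (∑ k, |x k| ^ r) ^ (1 / r)

/-- The operator norm of an `m × n` matrix from `ℓ_{p'}^n` to `ℓ_q^m`. -/
def opNorm {m n : ℕ} (p' q : ℝ) (A : Fin m → Fin n → ℝ) : ℝ :=
  sSup {c : ℝ | ∃ t : Fin n → ℝ, pNorm p' t ≤ 1 ∧ c = pNorm q (fun i => ∑ j, A i j * t j)}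

/-- A random vector is log-concave if
`P(Z ∈ λK + (1-λ)L) ≥ P(Z ∈ K)^λ P(Z ∈ L)^(1-λ)` for all compact nonempty `K, L`. -/
def IsLogConcave {Ω ι : Type*} [MeasurableSpace Ω] [Fintype ι] (P : Measure Ω)
    (Z : Ω → (ι → ℝ)) : Prop :=
  ∀ K L : Set (ι → ℝ), K.Nonempty → L.Nonempty → IsCompact K → IsCompact L →
    ∀ lam : ℝ, lam ∈ Set.Icc (0 : ℝ) 1 →
      P {ω | Z ω ∈ K} ^ lam * P {ω | Z ω ∈ L} ^ (1 - lam) ≤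
        P {ω | Z ω ∈ lam • K + (1 - lam) • L}

/-- A random vector is isotropic if it is centred and its covariance matrix is the identity. -/
def IsIsotropic {Ω ι : Type*} [MeasurableSpace Ω] [Fintype ι] [DecidableEq ι] (P : Measure Ω)
    (Z : Ω → (ι → ℝ)) : Prop :=
  (∀ i, ∫ ω, Z ω i ∂P = 0) ∧
    ∀ i j, ∫ ω, Z ω i * Z ω j ∂P = if i = j then 1 else 0

/-- A random vector is unconditional if flipping the signs of any subset of its coordinates
does not change its distribution. -/
def IsUnconditional {Ω ι : Type*} [MeasurableSpace Ω] [Fintype ι] (P : Measure Ω)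
    (Z : Ω → (ι → ℝ)) : Prop :=
  ∀ η : ι → ℝ, (∀ k, η k = 1 ∨ η k = -1) →
    IdentDistrib Z (fun ω k => η k * Z ω k) P P

/-- Membership in the unit ball of the dual norm of `ℓ_p`, i.e. `‖t‖_{p'} ≤ 1` where
`p'` is the Hölder conjugate of `p` (this also makes sense for `p = 1`, where `p' = ∞`). -/
def inDualBall {ι : Type*} [Fintype ι] (p : ℝ) (t : ι → ℝ) : Prop :=
  ∀ x : ι → ℝ, pNorm p x ≤ 1 → |∑ i, t i * x i| ≤ 1

namespace pNorm

variable {ι : Type*} [Fintype ι] {r s : ℝ}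

lemma nonneg (x : ι → ℝ) : 0 ≤ pNorm r x :=
  rpow_nonneg (Finset.sum_nonneg fun _ _ => rpow_nonneg (abs_nonneg _) _) _

lemma rpow_eq_sum (hr : 0 < r) (x : ι → ℝ) : pNorm r x ^ r = ∑ k, |x k| ^ r := by
  rw [pNorm, one_div, rpow_inv_rpow (Finset.sum_nonneg fun _ _ => rpow_nonneg (abs_nonneg _) _)
    hr.ne']

lemma zero (hr : 0 < r) : pNorm r (0 : ι → ℝ) = 0 := by
  simp [pNorm, zero_rpow hr.ne', zero_rpow (inv_ne_zero hr.ne')]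

lemma mono (hr : 0 < r) {x y : ι → ℝ} (h : ∀ k, |x k| ≤ |y k|) : pNorm r x ≤ pNorm r y :=
  rpow_le_rpow (Finset.sum_nonneg fun _ _ => rpow_nonneg (abs_nonneg _) _)
    (Finset.sum_le_sum fun k _ => rpow_le_rpow (abs_nonneg _) (h k) hr.le) (by positivity)

lemma abs_le (hr : 0 < r) (x : ι → ℝ) (k : ι) : |x k| ≤ pNorm r x := by
  calc |x k| = (|x k| ^ r) ^ (1 / r) := by rw [one_div, rpow_rpow_inv (abs_nonneg _) hr.ne']
    _ ≤ pNorm r x :=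
      rpow_le_rpow (by positivity)
        (Finset.single_le_sum (fun k _ => rpow_nonneg (abs_nonneg (x k)) r) (Finset.mem_univ k))
        (by positivity)

lemma single [DecidableEq ι] (hr : 0 < r) (j : ι) : pNorm r (Pi.single j (1 : ℝ)) = 1 := by
  rw [pNorm, Finset.sum_eq_single j (fun k _ hk => by simp [hk, zero_rpow hr.ne'])
    (by simp)]
  simp

lemma add_le (hr : 1 ≤ r) (x y : ι → ℝ) : pNorm r (x + y) ≤ pNorm r x + pNorm r y :=
  Lp_add_le Finset.univ x y hr

lemma le_sum_abs (hr : 1 ≤ r) (x : ι → ℝ) : pNorm r x ≤ ∑ k, |x k| := by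
  set S := ∑ k, |x k|
  have hS : 0 ≤ S := Finset.sum_nonneg fun k _ => abs_nonneg (x k)
  have hxS : ∀ k, |x k| ≤ S := fun k =>
    Finset.single_le_sum (fun k _ => abs_nonneg (x k)) (Finset.mem_univ k)
  have hpow : ∀ a : ℝ, 0 ≤ a → a ^ r = a * a ^ (r - 1) := fun a ha => by
    rw [← rpow_one_add' ha (by linarith), add_sub_cancel]
  have hsum : ∑ k, |x k| ^ r ≤ S ^ r :=
    calc ∑ k, |x k| ^ r ≤ ∑ k, |x k| * S ^ (r - 1) := Finset.sum_le_sum fun k _ => by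
          rw [hpow _ (abs_nonneg _)]
          gcongr
          exact hxS k
      _ = S ^ r := by rw [← Finset.sum_mul, ← hpow S hS]
  calc pNorm r x ≤ (S ^ r) ^ (1 / r) := rpow_le_rpow (by positivity) hsum (by positivity)
    _ = S := by rw [one_div, rpow_rpow_inv hS (by linarith)]

lemma sum_abs_mul_le (h : r.HolderConjugate s) (x y : ι → ℝ) :
    ∑ k, |x k| * |y k| ≤ pNorm r x * pNorm s y := by
  simpa only [pNorm, abs_abs] using
    inner_le_Lp_mul_Lq Finset.univ (fun k => |x k|) (fun k => |y k|) h

lemma exists_nonneg_sum_mul_abs_eq (h : r.HolderConjugate s) (x : ι → ℝ) :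
    ∃ t : ι → ℝ, (∀ k, 0 ≤ t k) ∧ pNorm s t ≤ 1 ∧ ∑ k, t k * |x k| = pNorm r x := by
  rcases (nonneg x : 0 ≤ pNorm r x).eq_or_lt with hN | hN
  · exact ⟨0, fun _ => le_rfl, by rw [zero h.symm.pos]; exact zero_le_one, by simp [← hN]⟩
  set N := pNorm r x
  have hr := h.pos
  have hsum : ∑ k, (|x k| / N) ^ r = 1 := by
    simp_rw [div_rpow (abs_nonneg _) hN.le, ← Finset.sum_div, ← rpow_eq_sum hr x]
    exact div_self (rpow_pos_of_pos hN r).ne'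
  refine ⟨fun k => (|x k| / N) ^ (r - 1), fun k => by positivity, le_of_eq ?_, ?_⟩
  · simp_rw [pNorm, abs_of_nonneg (rpow_nonneg (div_nonneg (abs_nonneg _) hN.le) _),
      ← rpow_mul (div_nonneg (abs_nonneg _) hN.le), h.sub_one_mul_conj, hsum, one_rpow]
  · calc ∑ k, (|x k| / N) ^ (r - 1) * |x k| = N * ∑ k, (|x k| / N) ^ r := by
          rw [Finset.mul_sum]
          refine Finset.sum_congr rfl fun k _ => ?_
          have hk : (|x k| / N) ^ r = (|x k| / N) ^ (r - 1) * (|x k| / N) := by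
            rw [← rpow_add_one' (div_nonneg (abs_nonneg _) hN.le) (by linarith), sub_add_cancel]
          rw [hk]
          field_simp
      _ = N := by rw [hsum, mul_one]

lemma exists_sum_mul_eq (h : r.HolderConjugate s) (x : ι → ℝ) :
    ∃ t : ι → ℝ, pNorm s t ≤ 1 ∧ ∑ k, x k * t k = pNorm r x := by
  obtain ⟨t, ht0, hts, htx⟩ := exists_nonneg_sum_mul_abs_eq h x
  refine ⟨fun k => SignType.sign (x k) * t k, ?_, ?_⟩
  · refine le_trans (mono h.symm.pos fun k => ?_) hts
    rw [abs_mul]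
    refine mul_le_of_le_one_left (abs_nonneg _) ?_
    rcases lt_trichotomy (x k) 0 with hk | hk | hk <;> simp [hk]
  · rw [← htx]
    refine Finset.sum_congr rfl fun k _ => ?_
    rw [← mul_assoc, mul_comm (x k), sign_mul_self, mul_comm]

end pNorm

namespace opNorm

variable {m n : ℕ} {p p' q : ℝ}

lemma pNorm_mulVec_le_sum_abs (hp' : 0 < p') (hq : 1 ≤ q) (A : Fin m → Fin n → ℝ)
    {t : Fin n → ℝ} (ht : pNorm p' t ≤ 1) :
    pNorm q (fun i => ∑ j, A i j * t j) ≤ ∑ i, ∑ j, |A i j| :=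
  (pNorm.le_sum_abs hq _).trans <| Finset.sum_le_sum fun i _ =>
    (Finset.abs_sum_le_sum_abs _ _).trans <| Finset.sum_le_sum fun j _ => by
      rw [abs_mul]
      exact mul_le_of_le_one_right (abs_nonneg _) ((pNorm.abs_le hp' t j).trans ht)

lemma bddAbove (hp' : 0 < p') (hq : 1 ≤ q) (A : Fin m → Fin n → ℝ) :
    BddAbove {c : ℝ | ∃ t : Fin n → ℝ, pNorm p' t ≤ 1 ∧
      c = pNorm q (fun i => ∑ j, A i j * t j)} :=
  ⟨_, by rintro _ ⟨t, ht, rfl⟩; exact pNorm_mulVec_le_sum_abs hp' hq A ht⟩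

lemma le_opNorm (hp' : 0 < p') (hq : 1 ≤ q) (A : Fin m → Fin n → ℝ) {t : Fin n → ℝ}
    (ht : pNorm p' t ≤ 1) : pNorm q (fun i => ∑ j, A i j * t j) ≤ opNorm p' q A :=
  le_csSup (bddAbove hp' hq A) ⟨t, ht, rfl⟩

lemma nonneg (hp' : 0 < p') (hq : 1 ≤ q) (A : Fin m → Fin n → ℝ) : 0 ≤ opNorm p' q A :=
  (pNorm.nonneg _).trans (le_opNorm hp' hq A (t := 0) (by rw [pNorm.zero hp']; exact zero_le_one))

lemma le_of_forall (hp' : 0 < p') {A : Fin m → Fin n → ℝ} {c : ℝ}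
    (h : ∀ t : Fin n → ℝ, pNorm p' t ≤ 1 → pNorm q (fun i => ∑ j, A i j * t j) ≤ c) :
    opNorm p' q A ≤ c :=
  csSup_le ⟨_, 0, by rw [pNorm.zero hp']; exact zero_le_one, rfl⟩
    (by rintro _ ⟨t, ht, rfl⟩; exact h t ht)

lemma le_sum_abs (hp' : 0 < p') (hq : 1 ≤ q) (A : Fin m → Fin n → ℝ) :
    opNorm p' q A ≤ ∑ i, ∑ j, |A i j| :=
  le_of_forall hp' fun _ ht => pNorm_mulVec_le_sum_abs hp' hq A ht

lemma le_add_sum_abs_sub (hp' : 0 < p') (hq : 1 ≤ q) (A B : Fin m → Fin n → ℝ) :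
    opNorm p' q A ≤ opNorm p' q B + ∑ i, ∑ j, |A i j - B i j| := by
  refine le_of_forall hp' fun t ht => ?_
  have hsplit : (fun i => ∑ j, A i j * t j) =
      (fun i => ∑ j, B i j * t j) + fun i => ∑ j, (A i j - B i j) * t j := by
    ext i
    simp only [Pi.add_apply, ← Finset.sum_add_distrib, sub_mul, add_sub_cancel]
  rw [hsplit]
  exact (pNorm.add_le hq _ _).trans <| add_le_add (le_opNorm hp' hq B ht)
    (pNorm_mulVec_le_sum_abs hp' hq (fun i j => A i j - B i j) ht)

lemma lipschitzWith (hp' : 0 < p') (hq : 1 ≤ q) :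
    LipschitzWith (m * n : NNReal) (opNorm p' q : (Fin m → Fin n → ℝ) → ℝ) := by
  refine LipschitzWith.of_dist_le_mul fun A B => ?_
  have hsum : ∑ i, ∑ j, |A i j - B i j| ≤ m * n * dist A B :=
    calc ∑ i, ∑ j, |A i j - B i j| ≤ ∑ _i : Fin m, ∑ _j : Fin n, dist A B :=
          Finset.sum_le_sum fun i _ => Finset.sum_le_sum fun j _ =>
            ((dist_le_pi_dist (A i) (B i) j).trans (dist_le_pi_dist A B i))
      _ = m * n * dist A B := by simp [mul_assoc]
  have h₁ := le_add_sum_abs_sub hp' hq A B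
  have h₂ := le_add_sum_abs_sub hp' hq B A
  simp only [abs_sub_comm (B _ _)] at h₂
  push_cast
  rw [Real.dist_eq, abs_le]
  constructor <;> linarith

lemma pNorm_col_le (hp' : 0 < p') (hq : 1 ≤ q) (A : Fin m → Fin n → ℝ) (j : Fin n) :
    pNorm q (fun i => A i j) ≤ opNorm p' q A := by
  simpa [Pi.single_apply] using le_opNorm hp' hq A (pNorm.single hp' j).le

lemma pNorm_row_le (hp : p.HolderConjugate p') (hq : 1 ≤ q) (A : Fin m → Fin n → ℝ)
    (i : Fin m) : pNorm p (A i) ≤ opNorm p' q A := by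
  obtain ⟨t, ht, hti⟩ := pNorm.exists_sum_mul_eq hp (A i)
  calc pNorm p (A i) ≤ |∑ j, A i j * t j| := hti ▸ le_abs_self _
    _ ≤ pNorm q (fun i => ∑ j, A i j * t j) :=
        pNorm.abs_le (zero_lt_one.trans_le hq) (fun i => ∑ j, A i j * t j) i
    _ ≤ opNorm p' q A := le_opNorm hp.symm.pos hq A ht

lemma iSup_abs_le (hp' : 0 < p') (hq : 1 ≤ q) (A : Fin m → Fin n → ℝ) :
    ⨆ i, ⨆ j, |A i j| ≤ opNorm p' q A :=
  Real.iSup_le (fun i => Real.iSup_le (fun j =>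
    (pNorm.abs_le (zero_lt_one.trans_le hq) (fun i => A i j) i).trans (pNorm_col_le hp' hq A j))
      (nonneg hp' hq A)) (nonneg hp' hq A)

end opNorm

open Filter Topology in
lemma IsLogConcave.tail_mul_tail_le_sq_midpoint {Ω ι : Type*} [MeasurableSpace Ω]
    [Fintype ι] {P : Measure Ω} [IsFiniteMeasure P] {Y : Ω → ι → ℝ} (hY : IsLogConcave P Y)
    (φ : (ι → ℝ) →L[ℝ] ℝ) (hφ : Function.Surjective φ) (s t : ℝ) :
    P.real {ω | s ≤ φ (Y ω)} * P.real {ω | t ≤ φ (Y ω)} ≤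
      P.real {ω | (s + t) / 2 ≤ φ (Y ω)} ^ 2 := by
  -- `IsLogConcave` only speaks about compact sets: truncate the half-spaces by balls and
  -- pass to the limit.
  set K : ℝ → ℕ → Set (ι → ℝ) := fun u N => {x | u ≤ φ x} ∩ Metric.closedBall 0 N
  have hK_compact : ∀ u N, IsCompact (K u N) := fun u N =>
    (isCompact_closedBall 0 _).inter_left (isClosed_le continuous_const φ.continuous)
  have hK_nonempty : ∀ u, ∀ᶠ N : ℕ in atTop, (K u N).Nonempty := by
    intro u
    obtain ⟨x, hx⟩ := hφ u
    filter_upwards [eventually_ge_atTop ⌈‖x‖⌉₊] with N hN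
    exact ⟨x, hx.ge, mem_closedBall_zero_iff.2 (Nat.ceil_le.1 hN)⟩
  have hK_tendsto : ∀ u, Tendsto (fun N => P {ω | Y ω ∈ K u N}) atTop
      (𝓝 (P {ω | u ≤ φ (Y ω)})) := by
    intro u
    have hmono : Monotone fun N : ℕ => {ω | Y ω ∈ K u N} := fun N N' h ω hω =>
      ⟨hω.1, Metric.closedBall_subset_closedBall (by exact_mod_cast h) hω.2⟩
    have hU : ⋃ N : ℕ, {ω | Y ω ∈ K u N} = {ω | u ≤ φ (Y ω)} := by
      ext ω
      simp only [Set.mem_ofPred_eq, Set.mem_iUnion, Set.mem_inter_iff, K,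
        mem_closedBall_zero_iff, exists_and_left]
      exact and_iff_left_of_imp fun _ => exists_nat_ge ‖Y ω‖
    rw [← hU]
    exact tendsto_measure_iUnion_atTop hmono
  have hK_mid : ∀ N, (1 / 2 : ℝ) • K s N + (1 - 1 / 2 : ℝ) • K t N ⊆ {x | (s + t) / 2 ≤ φ x} := by
    rintro N _ ⟨_, ⟨x, hx, rfl⟩, _, ⟨y, hy, rfl⟩, rfl⟩
    show (s + t) / 2 ≤ φ ((1 / 2 : ℝ) • x + (1 - 1 / 2 : ℝ) • y)
    rw [map_add, map_smul, map_smul, smul_eq_mul, smul_eq_mul]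
    have hxs : s ≤ φ x := hx.1
    have hyt : t ≤ φ y := hy.1
    linarith
  have hN : ∀ᶠ N in atTop, P {ω | Y ω ∈ K s N} * P {ω | Y ω ∈ K t N} ≤
      P {ω | (s + t) / 2 ≤ φ (Y ω)} ^ 2 := by
    filter_upwards [hK_nonempty s, hK_nonempty t] with N hs ht
    have hBM := hY _ _ hs ht (hK_compact s N) (hK_compact t N) (1 / 2) ⟨by norm_num, by norm_num⟩
    calc P {ω | Y ω ∈ K s N} * P {ω | Y ω ∈ K t N}
        = (P {ω | Y ω ∈ K s N} ^ (1 / 2 : ℝ) * P {ω | Y ω ∈ K t N} ^ (1 - 1 / 2 : ℝ)) ^ 2 := by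
          rw [mul_pow, ← ENNReal.rpow_natCast, ← ENNReal.rpow_natCast, ← ENNReal.rpow_mul,
            ← ENNReal.rpow_mul]
          norm_num
      _ ≤ P {ω | (s + t) / 2 ≤ φ (Y ω)} ^ 2 := by
          gcongr
          exact hBM.trans (measure_mono fun ω hω => hK_mid N hω)
  have hlim := le_of_tendsto (ENNReal.Tendsto.mul (hK_tendsto s) (Or.inr (measure_ne_top P _))
    (hK_tendsto t) (Or.inr (measure_ne_top P _))) hN
  simpa only [measureReal_def, ENNReal.toReal_mul, ENNReal.toReal_pow] using
    ENNReal.toReal_mono (by finiteness) hlim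

lemma le_half_pow_of_mul_le_sq {G : ℝ → ℝ} (hG0 : ∀ s, 0 ≤ G s)
    (hG : ∀ s t, G s * G t ≤ G ((s + t) / 2) ^ 2) {b d : ℝ} (hb : 1 / 2 ≤ G b)
    (hd : G (b + d) ≤ 1 / 4) (k : ℕ) : G (b + 2 ^ k * d) ≤ (1 / 2) ^ (2 ^ k + 1) := by
  induction k with
  | zero => norm_num at hd ⊢; exact hd
  | succ k ih =>
    have hstep := hG b (b + 2 ^ (k + 1) * d)
    rw [show (b + (b + 2 ^ (k + 1) * d)) / 2 = b + 2 ^ k * d by ring] at hstep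
    calc G (b + 2 ^ (k + 1) * d) ≤ 2 * G (b + 2 ^ k * d) ^ 2 := by
          nlinarith [hG0 (b + 2 ^ (k + 1) * d)]
      _ ≤ 2 * ((1 / 2) ^ (2 ^ k + 1)) ^ 2 := by gcongr; exact hG0 _
      _ = (1 / 2) ^ (2 ^ (k + 1) + 1) := by ring

lemma three_mul_add_two_le_two_pow_add_four (k : ℕ) : 3 * k + 2 ≤ 2 ^ k + 4 := by
  induction k with
  | zero => norm_num
  | succ k ih =>
    rcases Nat.lt_or_ge k 2 with hk | hk
    · interval_cases k <;> norm_num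
    · have : 2 ^ 2 ≤ 2 ^ k := Nat.pow_le_pow_right (by norm_num) hk
      rw [pow_succ]
      omega

lemma four_pow_succ_mul_half_pow_two_pow_le (k : ℕ) :
    (4 : ℝ) ^ (k + 1) * (1 / 2) ^ 2 ^ k ≤ 16 * (1 / 2) ^ k := by
  rw [one_div_pow, one_div_pow, mul_one_div, mul_one_div,
    div_le_div_iff₀ (by positivity) (by positivity)]
  calc (4 : ℝ) ^ (k + 1) * 2 ^ k = 2 ^ (3 * k + 2) := by
        rw [show (4 : ℝ) = 2 ^ 2 by norm_num, ← pow_mul, ← pow_add]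
        ring_nf
    _ ≤ 2 ^ (2 ^ k + 4) :=
        pow_le_pow_right₀ (by norm_num) (three_mul_add_two_le_two_pow_add_four k)
    _ = 16 * 2 ^ 2 ^ k := by rw [pow_add]; ring

lemma min_sq_le_min_sq_add {x t t' : ℝ} (ht : 0 ≤ t) (htt' : t ≤ t') :
    min (x ^ 2) (t' ^ 2) ≤ min (x ^ 2) (t ^ 2) + (t' ^ 2 - t ^ 2) * if t < |x| then 1 else 0 := by
  have hsq : t ^ 2 ≤ t' ^ 2 := by gcongr
  split_ifs with hx
  · have : t ^ 2 ≤ x ^ 2 := (pow_le_pow_left₀ ht hx.le 2).trans_eq (sq_abs x)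
    rw [min_eq_right this]
    linarith [min_le_right (x ^ 2) (t' ^ 2)]
  · have : x ^ 2 ≤ t ^ 2 :=
      (sq_abs x).symm.trans_le (pow_le_pow_left₀ (abs_nonneg x) (not_lt.1 hx) 2)
    rw [min_eq_left this, min_eq_left (this.trans hsq)]
    simp

section Anticoncentration

open Filter Topology

variable {Ω : Type*} [MeasurableSpace Ω] {P : Measure Ω}

lemma memLp_two_of_integral_sq_ne_zero {W : Ω → ℝ} (hW : AEStronglyMeasurable W P)
    (h : ∫ ω, W ω ^ 2 ∂P ≠ 0) : MemLp W 2 P :=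
  (memLp_two_iff_integrable_sq hW).2 (Integrable.of_integral_ne_zero h)

variable [IsProbabilityMeasure P]

lemma measureReal_tail_le_half_pow {W : Ω → ℝ} (hWi : Integrable W P)
    (hW : ∀ s t, P.real {ω | s ≤ W ω} * P.real {ω | t ≤ W ω} ≤
      P.real {ω | (s + t) / 2 ≤ W ω} ^ 2)
    {a : ℝ} (hWa : ∫ ω, |W ω| ∂P = a) (ha : 0 < a) (k : ℕ) :
    P.real {ω | -3 * a + 2 ^ k * (7 * a) ≤ W ω} ≤ (1 / 2) ^ (2 ^ k + 1) := by
  have hMarkov : ∀ c : ℝ, 0 < c → P.real {ω | c * a ≤ |W ω|} ≤ 1 / c := fun c hc => by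
    have := mul_meas_ge_le_integral_of_nonneg (ae_of_all _ fun ω => abs_nonneg (W ω)) hWi.abs
      (c * a)
    rw [hWa] at this
    rw [le_div_iff₀ hc]
    nlinarith
  refine le_half_pow_of_mul_le_sq (G := fun s => P.real {ω | s ≤ W ω})
    (fun _ => measureReal_nonneg) hW ?_ ?_ k
  · have hcover : Set.univ ⊆ {ω | -3 * a ≤ W ω} ∪ {ω | 3 * a ≤ |W ω|} := fun ω _ => by
      rcases le_or_gt (-3 * a) (W ω) with h | h
      · exact Or.inl h
      · exact Or.inr (by show 3 * a ≤ |W ω|; linarith [neg_le_abs (W ω)])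
    have := (measureReal_mono hcover).trans (measureReal_union_le (μ := P) _ _)
    rw [probReal_univ] at this
    linarith [hMarkov 3 (by norm_num)]
  · calc P.real {ω | -3 * a + 7 * a ≤ W ω} ≤ P.real {ω | 4 * a ≤ |W ω|} :=
          measureReal_mono fun ω (h : -3 * a + 7 * a ≤ W ω) =>
            show 4 * a ≤ |W ω| by linarith [le_abs_self (W ω)]
      _ ≤ 1 / 4 := hMarkov 4 (by norm_num)

lemma measureReal_abs_tail_le_half_pow {W : Ω → ℝ} (hWi : Integrable W P)
    (hW : ∀ s t, P.real {ω | s ≤ W ω} * P.real {ω | t ≤ W ω} ≤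
      P.real {ω | (s + t) / 2 ≤ W ω} ^ 2)
    (hW' : ∀ s t, P.real {ω | s ≤ -W ω} * P.real {ω | t ≤ -W ω} ≤
      P.real {ω | (s + t) / 2 ≤ -W ω} ^ 2)
    {a : ℝ} (hWa : ∫ ω, |W ω| ∂P = a) (ha : 0 < a) (k : ℕ) :
    P.real {ω | -3 * a + 2 ^ k * (7 * a) < |W ω|} ≤ (1 / 2) ^ 2 ^ k := by
  set T := -3 * a + 2 ^ k * (7 * a)
  have hsplit : {ω | T < |W ω|} ⊆ {ω | T ≤ W ω} ∪ {ω | T ≤ -W ω} := fun ω h => by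
    rcases abs_cases (W ω) with ⟨h', _⟩ | ⟨h', _⟩
    · exact Or.inl (show T ≤ W ω by rw [← h']; exact (h : T < |W ω|).le)
    · exact Or.inr (show T ≤ -W ω by rw [← h']; exact (h : T < |W ω|).le)
  have h₁ := measureReal_tail_le_half_pow hWi hW hWa ha k
  have h₂ := measureReal_tail_le_half_pow hWi.neg hW' (by simpa using hWa) ha k
  calc P.real {ω | T < |W ω|} ≤ P.real {ω | T ≤ W ω} + P.real {ω | T ≤ -W ω} :=
        (measureReal_mono hsplit).trans (measureReal_union_le _ _)
    _ ≤ (1 / 2) ^ (2 ^ k + 1) + (1 / 2) ^ (2 ^ k + 1) := add_le_add h₁ h₂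
    _ = (1 / 2) ^ 2 ^ k := by ring

lemma integral_sq_le_of_tail {W : Ω → ℝ} (hWm : Measurable W)
    (hW2 : Integrable (fun ω => W ω ^ 2) P) {T : ℕ → ℝ} (hT0 : 0 ≤ T 0) (hT : Monotone T)
    (hT_top : Tendsto T atTop atTop) {C : ℝ}
    (hC : ∀ K, T 0 ^ 2 + ∑ k ∈ Finset.range K,
      (T (k + 1) ^ 2 - T k ^ 2) * P.real {ω | T k < |W ω|} ≤ C) :
    ∫ ω, W ω ^ 2 ∂P ≤ C := by
  -- a discrete layer-cake bound for the truncations `min (W ^ 2) (T K ^ 2)`, then monotone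
  -- convergence
  set f : ℕ → Ω → ℝ := fun K ω => min (W ω ^ 2) (T K ^ 2)
  have hTnn : ∀ k, 0 ≤ T k := fun k => hT0.trans (hT (Nat.zero_le k))
  have hmeas : ∀ k, MeasurableSet {ω | T k < |W ω|} := fun k =>
    measurableSet_lt measurable_const hWm.abs
  have hf_int : ∀ K, Integrable (f K) P := fun K =>
    hW2.mono' ((hWm.pow_const 2).min measurable_const).aestronglyMeasurable
      (ae_of_all _ fun ω => by
        rw [Real.norm_of_nonneg (le_min (sq_nonneg _) (sq_nonneg _))]
        exact min_le_left _ _)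
  have hf_le : ∀ K, ∫ ω, f K ω ∂P ≤ C := fun K => by
    refine le_trans ?_ (hC K)
    have hpt : ∀ ω, f K ω ≤ T 0 ^ 2 + ∑ k ∈ Finset.range K,
        (T (k + 1) ^ 2 - T k ^ 2) * {ω | T k < |W ω|}.indicator 1 ω := fun ω => by
      induction K with
      | zero => simpa only [Finset.range_zero, Finset.sum_empty, add_zero] using min_le_right _ _
      | succ K ih =>
        rw [Finset.sum_range_succ, ← add_assoc]
        refine (min_sq_le_min_sq_add (hTnn K) (hT K.le_succ)).trans (add_le_add ih ?_)
        simp [Set.indicator_apply]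
    refine (integral_mono (hf_int K) ?_ hpt).trans_eq ?_
    · exact (integrable_const _).add (integrable_finsetSum _ fun k _ =>
        ((integrable_const 1).indicator (hmeas k)).const_mul _)
    · rw [integral_add (integrable_const _) (integrable_finsetSum _ fun k _ =>
        ((integrable_const 1).indicator (hmeas k)).const_mul _), integral_finsetSum]
      · simp only [integral_const, probReal_univ, one_smul, integral_const_mul]
        congr 1
        refine Finset.sum_congr rfl fun k _ => ?_
        rw [← integral_indicator_one (hmeas k)]
      · exact fun k _ => ((integrable_const 1).indicator (hmeas k)).const_mul _
  have hlim : Tendsto (fun K => ∫ ω, f K ω ∂P) atTop (𝓝 (∫ ω, W ω ^ 2 ∂P)) := by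
    refine integral_tendsto_of_tendsto_of_monotone hf_int hW2
      (ae_of_all _ fun ω K K' h => min_le_min_left _ (by gcongr; exacts [hTnn K, hT h]))
      (ae_of_all _ fun ω => tendsto_const_nhds.congr' ?_)
    filter_upwards [hT_top.eventually_ge_atTop |W ω|] with K hK
    exact (min_eq_left (by rw [← sq_abs]; gcongr)).symm
  exact le_of_tendsto' hlim hf_le

theorem one_div_fifty_le_integral_abs {W : Ω → ℝ} (hWm : Measurable W)
    (hW2 : ∫ ω, W ω ^ 2 ∂P = 1)
    (hW : ∀ s t, P.real {ω | s ≤ W ω} * P.real {ω | t ≤ W ω} ≤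
      P.real {ω | (s + t) / 2 ≤ W ω} ^ 2)
    (hW' : ∀ s t, P.real {ω | s ≤ -W ω} * P.real {ω | t ≤ -W ω} ≤
      P.real {ω | (s + t) / 2 ≤ -W ω} ^ 2) :
    1 / 50 ≤ ∫ ω, |W ω| ∂P := by
  have hWL2 : MemLp W 2 P :=
    memLp_two_of_integral_sq_ne_zero hWm.aestronglyMeasurable (by rw [hW2]; exact one_ne_zero)
  have hWi : Integrable W P := hWL2.integrable one_le_two
  set a := ∫ ω, |W ω| ∂P with hWa
  have ha : 0 < a := by
    refine (integral_nonneg fun ω => abs_nonneg (W ω)).lt_of_ne fun h => ?_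
    have hW0 : (fun ω => W ω ^ 2) =ᵐ[P] 0 := by
      filter_upwards [(integral_eq_zero_iff_of_nonneg (fun ω => abs_nonneg (W ω)) hWi.abs).1
        h.symm] with ω hω
      simpa using hω
    rw [integral_congr_ae hW0] at hW2
    simp at hW2
  set T : ℕ → ℝ := fun k => -3 * a + 2 ^ k * (7 * a)
  have hT_mono : Monotone T := fun k k' h => by
    simp only [T]
    gcongr
    exact one_le_two
  have hT_top : Tendsto T atTop atTop := tendsto_atTop_add_const_left _ _
    ((tendsto_pow_atTop_atTop_of_one_lt one_lt_two).atTop_mul_const (by positivity))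
  have hterm : ∀ k, (T (k + 1) ^ 2 - T k ^ 2) * P.real {ω | T k < |W ω|} ≤
      784 * a ^ 2 * (1 / 2) ^ k := fun k => by
    have hT : 0 ≤ T (k + 1) := (by simp only [T]; norm_num; linarith : 0 ≤ T 0).trans
      (hT_mono (Nat.zero_le _))
    calc (T (k + 1) ^ 2 - T k ^ 2) * P.real {ω | T k < |W ω|}
        ≤ T (k + 1) ^ 2 * (1 / 2) ^ 2 ^ k :=
          mul_le_mul (by nlinarith) (measureReal_abs_tail_le_half_pow hWi hW hW' hWa.symm ha k)
            measureReal_nonneg (sq_nonneg _)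
      _ ≤ (2 ^ (k + 1) * (7 * a)) ^ 2 * (1 / 2) ^ 2 ^ k := by
          gcongr
          simp only [T]
          linarith
      _ = 49 * a ^ 2 * (4 ^ (k + 1) * (1 / 2) ^ 2 ^ k) := by
          rw [show (4 : ℝ) = 2 ^ 2 by norm_num, ← pow_mul]
          ring
      _ ≤ 49 * a ^ 2 * (16 * (1 / 2) ^ k) :=
          mul_le_mul_of_nonneg_left (four_pow_succ_mul_half_pow_two_pow_le k) (by positivity)
      _ = 784 * a ^ 2 * (1 / 2) ^ k := by ring
  have hsq : ∫ ω, W ω ^ 2 ∂P ≤ 1584 * a ^ 2 := by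
    refine integral_sq_le_of_tail hWm hWL2.integrable_sq (by simp only [T]; linarith) hT_mono
      hT_top fun K => ?_
    calc T 0 ^ 2 + ∑ k ∈ Finset.range K, (T (k + 1) ^ 2 - T k ^ 2) * P.real {ω | T k < |W ω|}
        ≤ 16 * a ^ 2 + ∑ k ∈ Finset.range K, 784 * a ^ 2 * (1 / 2) ^ k :=
          add_le_add (le_of_eq (by simp only [T]; ring)) (Finset.sum_le_sum fun k _ => hterm k)
      _ ≤ 16 * a ^ 2 + 784 * a ^ 2 * 2 := by
          rw [← Finset.mul_sum]
          gcongr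
          exact sum_geometric_two_le K
      _ = 1584 * a ^ 2 := by ring
  nlinarith

end Anticoncentration

lemma IsIsotropic.integral_sq_apply {Ω ι : Type*} [MeasurableSpace Ω] [Fintype ι]
    [DecidableEq ι] {P : Measure Ω} {Y : Ω → ι → ℝ} (hY : IsIsotropic P Y) (j : ι) :
    ∫ ω, Y ω j ^ 2 ∂P = 1 := by
  simpa [sq] using hY.2 j j

lemma IsIsotropic.integrable_apply {Ω ι : Type*} [MeasurableSpace Ω] [Fintype ι]
    [DecidableEq ι] {P : Measure Ω} [IsFiniteMeasure P] {Y : Ω → ι → ℝ} (hY : IsIsotropic P Y)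
    (hYm : Measurable Y) (j : ι) : Integrable (fun ω => Y ω j) P :=
  (memLp_two_of_integral_sq_ne_zero (by fun_prop : Measurable fun ω => Y ω j).aestronglyMeasurable
    (by rw [hY.integral_sq_apply j]; exact one_ne_zero)).integrable one_le_two

lemma IsLogConcave.one_div_fifty_le_integral_abs_apply {Ω ι : Type*} [MeasurableSpace Ω]
    [Fintype ι] {P : Measure Ω} [IsProbabilityMeasure P] {Y : Ω → ι → ℝ}
    (hY : IsLogConcave P Y) (hYm : Measurable Y) (j : ι) (hY2 : ∫ ω, Y ω j ^ 2 ∂P = 1) :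
    1 / 50 ≤ ∫ ω, |Y ω j| ∂P := by
  classical
  let φ : (ι → ℝ) →L[ℝ] ℝ := ContinuousLinearMap.proj j
  have hφ : Function.Surjective φ := fun s => ⟨Pi.single j s, by simp [φ]⟩
  have hφ' : Function.Surjective (-φ) := fun s => ⟨Pi.single j (-s), by simp [φ]⟩
  exact one_div_fifty_le_integral_abs ((measurable_pi_apply j).comp hYm) hY2
    (hY.tail_mul_tail_le_sq_midpoint φ hφ)
    (hY.tail_mul_tail_le_sq_midpoint (-φ) hφ')

lemma mul_pNorm_le_integral {Ω ι : Type*} [MeasurableSpace Ω] [Fintype ι] {P : Measure Ω}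
    {r : ℝ} (hr : 1 < r) (a : ι → ℝ) {Z : Ω → ι → ℝ}
    (hZ : ∀ k, Integrable (fun ω => Z ω k) P) {δ : ℝ} (hδ : ∀ k, δ ≤ ∫ ω, |Z ω k| ∂P)
    {F : Ω → ℝ} (hF : Integrable F P) (hle : ∀ ω, pNorm r (fun k => a k * Z ω k) ≤ F ω) :
    δ * pNorm r a ≤ ∫ ω, F ω ∂P := by
  have hconj := Real.HolderConjugate.conjExponent hr
  obtain ⟨u, hu0, hu, hua⟩ := pNorm.exists_nonneg_sum_mul_abs_eq hconj a
  have hint : ∀ k, Integrable (fun ω => |a k * Z ω k| * |u k|) P := fun k =>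
    ((hZ k).const_mul (a k)).abs.mul_const _
  calc δ * pNorm r a = ∑ k, u k * |a k| * δ := by rw [← hua, mul_comm, Finset.sum_mul]
    _ ≤ ∑ k, u k * |a k| * ∫ ω, |Z ω k| ∂P := Finset.sum_le_sum fun k _ =>
        mul_le_mul_of_nonneg_left (hδ k) (mul_nonneg (hu0 k) (abs_nonneg _))
    _ = ∫ ω, ∑ k, |a k * Z ω k| * |u k| ∂P := by
        rw [integral_finsetSum _ fun k _ => hint k]
        refine Finset.sum_congr rfl fun k _ => ?_
        simp only [abs_mul, abs_of_nonneg (hu0 k), integral_mul_const, integral_const_mul]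
        ring
    _ ≤ ∫ ω, F ω ∂P := integral_mono (integrable_finsetSum _ fun k _ => hint k) hF fun ω =>
        (pNorm.sum_abs_mul_le hconj _ u).trans <|
          (mul_le_of_le_one_right (pNorm.nonneg _) hu).trans (hle ω)

lemma integrable_opNorm {Ω : Type*} [MeasurableSpace Ω] {P : Measure Ω} {m n : ℕ} {p' q : ℝ}
    (hp' : 0 < p') (hq : 1 ≤ q) {X : Ω → Fin m → Fin n → ℝ} (hXm : Measurable X)
    (hX : ∀ i j, Integrable (fun ω => X ω i j) P) :
    Integrable (fun ω => opNorm p' q (X ω)) P :=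
  (integrable_finsetSum _ fun i _ => integrable_finsetSum _ fun j _ => (hX i j).abs).mono'
    ((opNorm.lipschitzWith hp' hq).continuous.measurable.comp hXm).aestronglyMeasurable
    (ae_of_all _ fun ω => by
      rw [Real.norm_of_nonneg (opNorm.nonneg hp' hq _)]
      exact opNorm.le_sum_abs hp' hq _)

theorem statement1 :
    ∃ c : ℝ, 0 < c ∧
      ∀ (m n : ℕ), 1 ≤ m → 1 ≤ n →
      ∀ (Ω : Type) [MeasurableSpace Ω] (P : Measure Ω), IsProbabilityMeasure P →
      ∀ Y : Fin m → Ω → (Fin n → ℝ),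
        (∀ i, Measurable (Y i)) →
        iIndepFun Y P →
        (∀ i j, IdentDistrib (Y i) (Y j) P P) →
        (∀ i, IsLogConcave P (Y i)) →
        (∀ i, IsIsotropic P (Y i)) →
      ∀ A : Fin m → Fin n → ℝ,
      ∀ p q p' : ℝ, 2 ≤ p → 2 ≤ q → 1 / p + 1 / p' = 1 →
        c * ((⨆ i, pNorm p (A i)) + (⨆ j, pNorm q (fun i => A i j))
            + ∫ ω, ⨆ i, ⨆ j, |A i j * Y i ω j| ∂P) ≤
          ∫ ω, opNorm p' q (fun i j => A i j * Y i ω j) ∂P := by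
  refine ⟨1 / 150, by norm_num, fun m n _ _ Ω _ P _ Y hYm _ _ hLC hiso A p q p' hp hq hpp' => ?_⟩
  have hpp : p.HolderConjugate p' :=
    Real.holderConjugate_iff.2 ⟨by linarith, by simpa only [one_div] using hpp'⟩
  have hp' := hpp.symm.pos
  have hq1 : 1 ≤ q := by linarith
  have hYint : ∀ i j, Integrable (fun ω => Y i ω j) P := fun i j =>
    (hiso i).integrable_apply (hYm i) j
  have hEY : ∀ i j, 1 / 50 ≤ ∫ ω, |Y i ω j| ∂P := fun i j =>
    (hLC i).one_div_fifty_le_integral_abs_apply (hYm i) j ((hiso i).integral_sq_apply j)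
  set E := ∫ ω, opNorm p' q (fun i j => A i j * Y i ω j) ∂P
  have hint : Integrable (fun ω => opNorm p' q (fun i j => A i j * Y i ω j)) P :=
    integrable_opNorm hp' hq1 (by fun_prop) fun i j => (hYint i j).const_mul _
  have hE : 0 ≤ E := integral_nonneg fun ω => opNorm.nonneg hp' hq1 _
  have hrows : ⨆ i, pNorm p (A i) ≤ 50 * E := Real.iSup_le (fun i => by
    have := mul_pNorm_le_integral (by linarith) (A i) (hYint i) (hEY i) hint
      fun ω => opNorm.pNorm_row_le hpp hq1 (fun i j => A i j * Y i ω j) i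
    linarith) (by positivity)
  have hcols : ⨆ j, pNorm q (fun i => A i j) ≤ 50 * E := Real.iSup_le (fun j => by
    have := mul_pNorm_le_integral (by linarith) (fun i => A i j) (fun i => hYint i j)
      (fun i => hEY i j) hint fun ω => opNorm.pNorm_col_le hp' hq1 (fun i j => A i j * Y i ω j) j
    linarith) (by positivity)
  have hmax : ∫ ω, ⨆ i, ⨆ j, |A i j * Y i ω j| ∂P ≤ E :=
    integral_mono_of_nonneg
      (ae_of_all _ fun ω => Real.iSup_nonneg fun i => Real.iSup_nonneg fun j => abs_nonneg _) hint
      (ae_of_all _ fun ω => opNorm.iSup_abs_le hp' hq1 _)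
  linarith

end
end

section
/- There exists a universal constant C > 0 such that for every log-concave random vector Z in ℝ^n, every t ∈ ℝ^n, and every q ≥ 1, ℙ( |Σ_{i=1}^n t_i Z_i| ≥ (1/2) · (𝔼|Σ_{i=1}^n t_i Z_i|^q)^{1/q} ) ≥ e^{-Cq}. -/
/-!
For `X = ⟪t, Z⟫`, the tail `a ↦ ℙ(X ≥ a)` is log-concave: half-spaces are closed and convex, and
log-concavity passes from compact to closed sets by exhaustion. Let `M = (𝔼|X|^q)^{1/q}` and
`p = ℙ(|X| ≥ M/2)`, and suppose `p < e^{-10q}`. Then `ℙ(X ≥ -M/2) ≥ 1/2`, and log-concavity at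
`-M/2 < M/2 ≤ k M/2` gives `ℙ(|X| ≥ k M/2) ≤ 2 (2p)^{(k+1)/2}` for `k ≥ 1`. Summing `|X|^q` over
the layers `k M/2 ≤ |X| < (k+1) M/2` then yields `𝔼|X|^q < M^q`, a contradiction; so `C = 10`
works.
-/

open MeasureTheory ProbabilityTheory Real
open scoped Pointwise

noncomputable section

open Filter Set Topology
open scoped ENNReal

/-- Log-concavity applied to `m` as the convex combination of `-m` and `s * m` with weight
`2 / (s + 1)` on `s * m`. -/
theorem le_rpow_of_logConcave {g : ℝ → ℝ≥0∞}
    (hg : ∀ a b lam : ℝ, lam ∈ Icc (0 : ℝ) 1 →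
      g a ^ lam * g b ^ (1 - lam) ≤ g (lam * a + (1 - lam) * b))
    {m s : ℝ} (hs : 1 ≤ s) (hbase : 2⁻¹ ≤ g (-m)) :
    g (s * m) ≤ (2 * g m) ^ ((s + 1) / 2) := by
  set lam := (s - 1) / (s + 1) with hlam
  have hs1 : 0 < s + 1 := by linarith
  have hlam0 : 0 ≤ lam := div_nonneg (by linarith) hs1.le
  have hlam1 : lam ≤ 1 := (div_le_one hs1).2 (by linarith)
  have hcomb : lam * -m + (1 - lam) * (s * m) = m := by rw [hlam]; field_simp; ring
  have hhalf : 2⁻¹ ≤ g (-m) ^ lam :=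
    calc (2⁻¹ : ℝ≥0∞) = 2⁻¹ ^ (1 : ℝ) := (ENNReal.rpow_one _).symm
      _ ≤ 2⁻¹ ^ lam := ENNReal.rpow_le_rpow_of_exponent_ge (by norm_num) hlam1
      _ ≤ g (-m) ^ lam := ENNReal.rpow_le_rpow hbase hlam0
  have hkey : g (s * m) ^ (1 - lam) ≤ 2 * g m := by
    rw [← ENNReal.inv_mul_le_iff (by norm_num) (by norm_num)]
    calc 2⁻¹ * g (s * m) ^ (1 - lam) ≤ g (-m) ^ lam * g (s * m) ^ (1 - lam) := by gcongr
      _ ≤ g m := by simpa only [hcomb] using hg (-m) (s * m) lam ⟨hlam0, hlam1⟩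
  have hexp : (1 - lam) * ((s + 1) / 2) = 1 := by rw [hlam]; field_simp; ring
  calc g (s * m) = (g (s * m) ^ (1 - lam)) ^ ((s + 1) / 2) := by
        rw [← ENNReal.rpow_mul, hexp, ENNReal.rpow_one]
    _ ≤ (2 * g m) ^ ((s + 1) / 2) := ENNReal.rpow_le_rpow hkey (by positivity)

theorem rpow_mul_two_mul_rpow_le_exp {q s : ℝ} (hq : 1 ≤ q) (hs : 1 ≤ s) :
    (s + 1) ^ q * (2 * (2 * exp (-10 * q)) ^ ((s + 1) / 2)) ≤ exp (-s) := by
  have h2 : (2 : ℝ) ≤ exp 1 := by linarith [add_one_le_exp (1 : ℝ)]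
  calc (s + 1) ^ q * (2 * (2 * exp (-10 * q)) ^ ((s + 1) / 2))
      ≤ exp s ^ q * (exp 1 * (exp 1 * exp (-10 * q)) ^ ((s + 1) / 2)) := by
        gcongr
        exact add_one_le_exp s
    _ = exp (s * q + (1 + (1 + -10 * q) * ((s + 1) / 2))) := by
        rw [← exp_add, ← exp_mul, ← exp_mul, ← exp_add, ← exp_add]
    _ ≤ exp (-s) := exp_le_exp.2 (by nlinarith [mul_nonneg (sub_nonneg.2 hq) (sub_nonneg.2 hs)])

section Layers

variable {Ω : Type*} [MeasurableSpace Ω] {μ : Measure Ω} {Y : Ω → ℝ}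

theorem lintegral_ofReal_rpow_le_tsum (hY : Measurable Y) (hY0 : 0 ≤ Y) {m q : ℝ}
    (hm : 0 < m) (hq : 0 ≤ q) :
    ∫⁻ ω, ENNReal.ofReal (Y ω ^ q) ∂μ ≤
      ∑' k : ℕ, ENNReal.ofReal (((k + 1) * m) ^ q) * μ {ω | k * m ≤ Y ω} := by
  have hmeas : ∀ k : ℕ, MeasurableSet {ω | k * m ≤ Y ω} := fun k =>
    measurableSet_le measurable_const hY
  have hpt : ∀ ω, ENNReal.ofReal (Y ω ^ q) ≤
      ∑' k : ℕ, {ω | k * m ≤ Y ω}.indicator (fun _ => ENNReal.ofReal (((k + 1) * m) ^ q)) ω := by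
    intro ω
    have hlow : ⌊Y ω / m⌋₊ * m ≤ Y ω :=
      (le_div_iff₀ hm).1 (Nat.floor_le (div_nonneg (hY0 ω) hm.le))
    have hup : Y ω < (⌊Y ω / m⌋₊ + 1) * m := (div_lt_iff₀ hm).1 (Nat.lt_floor_add_one _)
    refine le_trans ?_ (ENNReal.le_tsum ⌊Y ω / m⌋₊)
    rw [indicator_of_mem (show ω ∈ {ω' | (⌊Y ω / m⌋₊ : ℝ) * m ≤ Y ω'} from hlow)]
    exact ENNReal.ofReal_le_ofReal (rpow_le_rpow (hY0 ω) hup.le hq)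
  calc ∫⁻ ω, ENNReal.ofReal (Y ω ^ q) ∂μ
      ≤ ∫⁻ ω, ∑' k : ℕ, {ω | k * m ≤ Y ω}.indicator
          (fun _ => ENNReal.ofReal (((k + 1) * m) ^ q)) ω ∂μ := lintegral_mono hpt
    _ = _ := by
        rw [lintegral_tsum fun k => (measurable_const.indicator (hmeas k)).aemeasurable]
        simp only [lintegral_indicator_const (hmeas _)]

/-- A tail decaying like `e^{-k}` on the layers `k m ≤ Y` keeps the `q`-th moment of `Y` below
that of the constant `2 m`, since `∑ e^{-k} = (1 - e^{-1})⁻¹ < 2 ≤ 2 ^ q`. -/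
theorem lintegral_ofReal_rpow_lt_of_tail (hY : Measurable Y) (hY0 : 0 ≤ Y) {m q : ℝ}
    (hm : 0 < m) (hq : 1 ≤ q)
    (htail : ∀ k : ℕ,
      ENNReal.ofReal (((k + 1) * m) ^ q) * μ {ω | k * m ≤ Y ω} ≤
        ENNReal.ofReal (m ^ q * exp (-k))) :
    ∫⁻ ω, ENNReal.ofReal (Y ω ^ q) ∂μ < ENNReal.ofReal ((2 * m) ^ q) := by
  have he : exp (-1) < 2⁻¹ := by simpa using exp_neg_one_lt_half
  have hgeom : (1 - exp (-1))⁻¹ < 2 ^ q := by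
    refine lt_of_lt_of_le ?_ (by simpa using rpow_le_rpow_of_exponent_le one_le_two hq)
    rw [inv_lt_comm₀ (by linarith) two_pos]
    linarith
  calc ∫⁻ ω, ENNReal.ofReal (Y ω ^ q) ∂μ
      ≤ ∑' k : ℕ, ENNReal.ofReal (((k + 1) * m) ^ q) * μ {ω | k * m ≤ Y ω} :=
        lintegral_ofReal_rpow_le_tsum hY hY0 hm (by linarith)
    _ ≤ ∑' k : ℕ, ENNReal.ofReal (m ^ q * exp (-1) ^ k) := by
        refine ENNReal.tsum_le_tsum fun k => ?_
        simpa only [← exp_nat_mul, mul_neg_one] using htail k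
    _ = ENNReal.ofReal (m ^ q * (1 - exp (-1))⁻¹) := by
        rw [← ENNReal.ofReal_tsum_of_nonneg (fun k => by positivity)
          ((summable_geometric_of_lt_one (exp_nonneg _) (by linarith)).mul_left _),
          tsum_mul_left, tsum_geometric_of_lt_one (exp_nonneg _) (by linarith)]
    _ < ENNReal.ofReal ((2 * m) ^ q) := by
        rw [ENNReal.ofReal_lt_ofReal_iff (by positivity), mul_rpow two_pos.le hm.le, mul_comm]
        exact mul_lt_mul_of_pos_right hgeom (by positivity)

end Layers

section LogConcave

variable {Ω ι : Type*} [MeasurableSpace Ω] [Fintype ι] {P : Measure Ω} {Z : Ω → ι → ℝ}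

lemma tendsto_measure_preimage_inter_closedBall (P : Measure Ω) (Z : Ω → ι → ℝ)
    (K : Set (ι → ℝ)) :
    Tendsto (fun N : ℕ => P {ω | Z ω ∈ K ∩ Metric.closedBall 0 N}) atTop
      (𝓝 (P {ω | Z ω ∈ K})) := by
  have hmono : Monotone fun N : ℕ => {ω | Z ω ∈ K ∩ Metric.closedBall 0 N} :=
    fun N M hNM ω hω => ⟨hω.1, Metric.closedBall_subset_closedBall (by exact_mod_cast hNM) hω.2⟩
  have hunion : ⋃ N : ℕ, {ω | Z ω ∈ K ∩ Metric.closedBall 0 N} = {ω | Z ω ∈ K} := by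
    ext ω
    simp only [mem_iUnion, mem_ofPred_eq, mem_inter_iff, Metric.mem_closedBall, dist_zero_right]
    exact ⟨fun ⟨_, h, _⟩ => h, fun h => (exists_nat_ge ‖Z ω‖).imp fun _ hN => ⟨h, hN⟩⟩
  rw [← hunion]
  exact tendsto_measure_iUnion_atTop hmono

theorem IsLogConcave.rpow_mul_rpow_le_measure_of_isClosed [IsFiniteMeasure P]
    (hZ : IsLogConcave P Z) {K L : Set (ι → ℝ)} (hK : IsClosed K) (hL : IsClosed L)
    (hKne : K.Nonempty) (hLne : L.Nonempty) {lam : ℝ} (hlam : lam ∈ Icc (0 : ℝ) 1) :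
    P {ω | Z ω ∈ K} ^ lam * P {ω | Z ω ∈ L} ^ (1 - lam) ≤
      P {ω | Z ω ∈ lam • K + (1 - lam) • L} := by
  have hlim := ENNReal.Tendsto.mul
    ((ENNReal.continuous_rpow_const.tendsto _).comp
      (tendsto_measure_preimage_inter_closedBall P Z K))
    (Or.inr (ENNReal.rpow_ne_top_of_nonneg (sub_nonneg.2 hlam.2) (measure_ne_top P _)))
    ((ENNReal.continuous_rpow_const.tendsto _).comp
      (tendsto_measure_preimage_inter_closedBall P Z L))
    (Or.inr (ENNReal.rpow_ne_top_of_nonneg hlam.1 (measure_ne_top P _)))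
  obtain ⟨x, hx⟩ := hKne
  obtain ⟨y, hy⟩ := hLne
  refine le_of_tendsto hlim ((eventually_ge_atTop (max ⌈‖x‖⌉₊ ⌈‖y‖⌉₊)).mono fun N hN => ?_)
  have hmem : ∀ z : ι → ℝ, ⌈‖z‖⌉₊ ≤ N → z ∈ Metric.closedBall (0 : ι → ℝ) N := fun z hz => by
    simpa using (Nat.le_ceil _).trans (by exact_mod_cast hz)
  refine (hZ (K ∩ Metric.closedBall 0 N) (L ∩ Metric.closedBall 0 N)
    ⟨x, hx, hmem x (le_of_max_le_left hN)⟩ ⟨y, hy, hmem y (le_of_max_le_right hN)⟩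
    ((isCompact_closedBall _ _).inter_left hK) ((isCompact_closedBall _ _).inter_left hL)
    lam hlam).trans (measure_mono fun ω hω => ?_)
  exact add_subset_add (smul_set_mono inter_subset_left) (smul_set_mono inter_subset_left) hω

lemma exists_dotProduct_eq {t : ι → ℝ} (ht : t ≠ 0) (a : ℝ) : ∃ x : ι → ℝ, t ⬝ᵥ x = a :=
  ⟨(a / (t ⬝ᵥ t)) • t, by
    rw [dotProduct_smul, smul_eq_mul, div_mul_cancel₀ _ (mt dotProduct_self_eq_zero.1 ht)]⟩

theorem IsLogConcave.rpow_mul_rpow_le_measure_dotProduct [IsFiniteMeasure P] (hZ : IsLogConcave P Z)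
    {t : ι → ℝ} (ht : t ≠ 0) (a b : ℝ) {lam : ℝ} (hlam : lam ∈ Icc (0 : ℝ) 1) :
    P {ω | a ≤ t ⬝ᵥ Z ω} ^ lam * P {ω | b ≤ t ⬝ᵥ Z ω} ^ (1 - lam) ≤
      P {ω | lam * a + (1 - lam) * b ≤ t ⬝ᵥ Z ω} := by
  have hcont : Continuous fun x : ι → ℝ => t ⬝ᵥ x := continuous_const.dotProduct continuous_id
  obtain ⟨x, hx⟩ := exists_dotProduct_eq ht a
  obtain ⟨y, hy⟩ := exists_dotProduct_eq ht b
  refine (hZ.rpow_mul_rpow_le_measure_of_isClosed (K := {x | a ≤ t ⬝ᵥ x}) (L := {x | b ≤ t ⬝ᵥ x})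
    (isClosed_le continuous_const hcont) (isClosed_le continuous_const hcont)
    ⟨x, hx.ge⟩ ⟨y, hy.ge⟩ hlam).trans (measure_mono ?_)
  rintro ω ⟨_, ⟨u, hu, rfl⟩, _, ⟨v, hv, rfl⟩, hω⟩
  simp only [mem_ofPred_eq, ← hω, dotProduct_add, dotProduct_smul, smul_eq_mul]
  exact add_le_add (mul_le_mul_of_nonneg_left hu hlam.1)
    (mul_le_mul_of_nonneg_left hv (sub_nonneg.2 hlam.2))

section Probability

variable [IsProbabilityMeasure P]

theorem IsLogConcave.measure_le_dotProduct_le_rpow (hZ : IsLogConcave P Z) {t : ι → ℝ}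
    (ht : t ≠ 0) {m s : ℝ} (hs : 1 ≤ s) (hp : P {ω | m ≤ |t ⬝ᵥ Z ω|} ≤ 2⁻¹) :
    P {ω | s * m ≤ t ⬝ᵥ Z ω} ≤ (2 * P {ω | m ≤ |t ⬝ᵥ Z ω|}) ^ ((s + 1) / 2) := by
  have hcover : 1 ≤ P {ω | -m ≤ t ⬝ᵥ Z ω} + P {ω | m ≤ |t ⬝ᵥ Z ω|} := by
    rw [← measure_univ (μ := P)]
    refine (measure_mono fun ω _ => ?_).trans (measure_union_le _ _)
    rcases le_or_gt (-m) (t ⬝ᵥ Z ω) with h | h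
    · exact Or.inl h
    · exact Or.inr (show m ≤ |t ⬝ᵥ Z ω| from le_abs.2 (Or.inr (by linarith)))
  have hbase : 2⁻¹ ≤ P {ω | -m ≤ t ⬝ᵥ Z ω} := by
    refine ENNReal.le_of_add_le_add_right (by norm_num : (2⁻¹ : ℝ≥0∞) ≠ ⊤) ?_
    rw [ENNReal.inv_two_add_inv_two]
    exact hcover.trans (add_le_add le_rfl hp)
  refine (le_rpow_of_logConcave
    (fun a b lam hlam => hZ.rpow_mul_rpow_le_measure_dotProduct ht a b hlam) hs hbase).trans
    (ENNReal.rpow_le_rpow ?_ (by positivity))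
  gcongr
  exact le_abs_self _

theorem IsLogConcave.measure_le_abs_dotProduct_le_rpow (hZ : IsLogConcave P Z) {t : ι → ℝ}
    (ht : t ≠ 0) {m s : ℝ} (hs : 1 ≤ s) (hp : P {ω | m ≤ |t ⬝ᵥ Z ω|} ≤ 2⁻¹) :
    P {ω | s * m ≤ |t ⬝ᵥ Z ω|} ≤ 2 * (2 * P {ω | m ≤ |t ⬝ᵥ Z ω|}) ^ ((s + 1) / 2) := by
  have hneg : ∀ r, {ω | r ≤ |(-t) ⬝ᵥ Z ω|} = {ω | r ≤ |t ⬝ᵥ Z ω|} := by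
    simp only [neg_dotProduct, abs_neg, implies_true]
  have hupper := hZ.measure_le_dotProduct_le_rpow ht hs hp
  have hlower := hZ.measure_le_dotProduct_le_rpow (neg_ne_zero.2 ht) hs ((hneg m).symm ▸ hp)
  rw [hneg] at hlower
  calc P {ω | s * m ≤ |t ⬝ᵥ Z ω|}
      ≤ P ({ω | s * m ≤ t ⬝ᵥ Z ω} ∪ {ω | s * m ≤ (-t) ⬝ᵥ Z ω}) := by
        refine measure_mono fun ω hω => ?_
        simpa only [mem_union, mem_ofPred_eq, neg_dotProduct] using le_abs.1 hω
    _ ≤ P {ω | s * m ≤ t ⬝ᵥ Z ω} + P {ω | s * m ≤ (-t) ⬝ᵥ Z ω} := measure_union_le _ _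
    _ ≤ 2 * (2 * P {ω | m ≤ |t ⬝ᵥ Z ω|}) ^ ((s + 1) / 2) := by
        rw [two_mul]; exact add_le_add hupper hlower

theorem IsLogConcave.ofReal_rpow_mul_measure_le (hZ : IsLogConcave P Z) {t : ι → ℝ}
    (ht : t ≠ 0) {q m : ℝ} (hq : 1 ≤ q) (hm : 0 ≤ m)
    (hp : P {ω | m ≤ |t ⬝ᵥ Z ω|} < ENNReal.ofReal (exp (-10 * q))) (k : ℕ) :
    ENNReal.ofReal (((k + 1) * m) ^ q) * P {ω | k * m ≤ |t ⬝ᵥ Z ω|} ≤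
      ENNReal.ofReal (m ^ q * exp (-k)) := by
  rcases Nat.eq_zero_or_pos k with rfl | hk
  · simp
  have hk1 : (1 : ℝ) ≤ k := by exact_mod_cast hk
  have hsmall : ENNReal.ofReal (exp (-10 * q)) ≤ 2⁻¹ := by
    rw [← ENNReal.ofReal_ofNat 2, ← ENNReal.ofReal_inv_of_pos two_pos]
    refine ENNReal.ofReal_le_ofReal ((exp_le_exp.2 (show -10 * q ≤ -1 by linarith)).trans ?_)
    simpa using exp_neg_one_lt_half.le
  have htail := hZ.measure_le_abs_dotProduct_le_rpow ht hk1 (hp.le.trans hsmall)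
  calc ENNReal.ofReal (((k + 1) * m) ^ q) * P {ω | k * m ≤ |t ⬝ᵥ Z ω|}
      ≤ ENNReal.ofReal (((k + 1) * m) ^ q) *
          (2 * (2 * ENNReal.ofReal (exp (-10 * q))) ^ (((k : ℝ) + 1) / 2)) := by
        gcongr
        exact htail.trans (by gcongr)
    _ = ENNReal.ofReal
          (m ^ q * ((k + 1) ^ q * (2 * (2 * exp (-10 * q)) ^ (((k : ℝ) + 1) / 2)))) := by
        rw [← ENNReal.ofReal_ofNat 2, ← ENNReal.ofReal_mul zero_le_two,
          ENNReal.ofReal_rpow_of_nonneg (by positivity) (by positivity),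
          ← ENNReal.ofReal_mul zero_le_two, ← ENNReal.ofReal_mul (by positivity),
          mul_rpow (by positivity) hm]
        ring_nf
    _ ≤ ENNReal.ofReal (m ^ q * exp (-k)) :=
        ENNReal.ofReal_le_ofReal (mul_le_mul_of_nonneg_left
          (rpow_mul_two_mul_rpow_le_exp hq hk1) (by positivity))

end Probability

end LogConcave

theorem statement7 :
    ∃ C : ℝ, 0 < C ∧
      ∀ (n : ℕ) (Ω : Type) [MeasurableSpace Ω] (P : Measure Ω), IsProbabilityMeasure P →
      ∀ Z : Ω → Fin n → ℝ, Measurable Z → IsLogConcave P Z →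
      ∀ (t : Fin n → ℝ) (q : ℝ), 1 ≤ q →
        ENNReal.ofReal (Real.exp (-C * q)) ≤
          P {ω | (1 / 2) * (∫ ω', |∑ i, t i * Z ω' i| ^ q ∂P) ^ (1 / q)
              ≤ |∑ i, t i * Z ω i|} := by
  refine ⟨10, by norm_num, fun n Ω _ P hP Z hZ hlc t q hq => ?_⟩
  change ENNReal.ofReal (exp (-10 * q)) ≤
    P {ω | 1 / 2 * (∫ ω', |t ⬝ᵥ Z ω'| ^ q ∂P) ^ (1 / q) ≤ |t ⬝ᵥ Z ω|}
  set I := ∫ ω', |t ⬝ᵥ Z ω'| ^ q ∂P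
  have hq0 : 0 < q := by linarith
  rcases (show 0 ≤ I from integral_nonneg fun ω => by positivity).eq_or_lt with hI | hI
  · rw [← hI, zero_rpow (one_div_pos.2 hq0).ne', mul_zero]
    simpa using exp_le_one_iff.2 (by linarith : -10 * q ≤ 0)
  have ht : t ≠ 0 := by
    rintro rfl
    simp [I, zero_rpow hq0.ne'] at hI
  have hint : Integrable (fun ω => |t ⬝ᵥ Z ω| ^ q) P := by
    by_contra h
    exact hI.ne' (integral_undef h)
  have hY : Measurable fun ω => |t ⬝ᵥ Z ω| :=
    (continuous_abs.comp (continuous_const.dotProduct continuous_id)).measurable.comp hZ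
  by_contra! hp
  have hlt := lintegral_ofReal_rpow_lt_of_tail hY (fun ω => abs_nonneg _) (by positivity) hq
    (hlc.ofReal_rpow_mul_measure_le ht hq (by positivity) hp)
  rw [← ofReal_integral_eq_lintegral_ofReal hint (ae_of_all _ fun ω => by positivity),
    ← mul_assoc, mul_one_div_cancel two_ne_zero, one_mul, ← rpow_mul hI.le,
    one_div_mul_cancel hq0.ne', rpow_one] at hlt
  exact lt_irrefl _ hlt
end
end

section
/- Let m ≥ 2, n ≥ 1, γ > 0, and p ≥ max(1, 1/γ). Let B = (B_{ij}) be a deterministic m×n real matrix and let Z = (Z_{ij}) be an m×n random matrix such that each row Z_i = (Z_{ij})_{j≤n} is an isotropic log-concave random vector in ℝ^n. Then there exists a constant C > 0 depending only on p and γ such that 𝔼 max_{i≤m} ( Σ_{j=1}^n |B_{ij}|^p · |Z_{ij}|^{pγ} )^{1/p} ≤ C · (log m)^γ · max_{i≤m} (Σ_{j=1}^n |B_{ij}|^p)^{1/p}. -/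
/-!
A coordinate of a log-concave random vector is a log-concave random variable. If such a
variable `X` has `𝔼 X² = 1`, then `[-2, 2]` carries mass at least `3/4` (Chebyshev), and
log-concavity applied to `[-2, 2]` and a compact `K ⊆ {|x| ≥ 2s}` with weight `2 / (s + 1)`
on `K` lands in `{|x| ≥ 2}`, of mass at most `1/4`; this gives `ℙ(|X| ≥ 2s) ≤ e^{-s/2}` and
hence `‖X‖_s ≤ 40 s`. For `q = p + log m`, Minkowski's inequality in `L^{q/p}` bounds the
`L^q` norm of each row `(∑ⱼ |Bᵢⱼ|^p |Zᵢⱼ|^{pγ})^{1/p}` by `(40 q γ)^γ ‖Bᵢ‖_p`, and the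
maximum over the `m` rows costs only a factor `m^{1/q} ≤ e` in `L^q`.
-/

open MeasureTheory ProbabilityTheory Real
open scoped Pointwise

noncomputable section

open Filter Set
open scoped ENNReal

def IsLogConcaveReal {Ω : Type*} [MeasurableSpace Ω] (P : Measure Ω) (X : Ω → ℝ) : Prop :=
  ∀ K L : Set ℝ, K.Nonempty → L.Nonempty → IsCompact K → IsCompact L →
    ∀ t ∈ Icc (0 : ℝ) 1,
      P {ω | X ω ∈ K} ^ t * P {ω | X ω ∈ L} ^ (1 - t) ≤
        P {ω | X ω ∈ t • K + (1 - t) • L}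

namespace ENNReal

theorem iSup_rpow {ι : Sort*} [Nonempty ι] (f : ι → ℝ≥0∞) {t : ℝ} (ht : 0 ≤ t) :
    (⨆ i, f i) ^ t = ⨆ i, f i ^ t :=
  (monotone_rpow_of_nonneg ht).map_ciSup_of_continuousAt continuous_rpow_const.continuousAt

theorem iSup_mul_iSup_le_of_monotone {ι : Type*} [SemilatticeSup ι] {u v : ι → ℝ≥0∞}
    (hu : Monotone u) (hv : Monotone v) {c : ℝ≥0∞} (h : ∀ i, u i * v i ≤ c) :
    (⨆ i, u i) * (⨆ i, v i) ≤ c := by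
  rw [ENNReal.iSup_mul]
  refine iSup_le fun i => ?_
  rw [ENNReal.mul_iSup]
  exact iSup_le fun j => (mul_le_mul' (hu le_sup_left) (hv le_sup_right)).trans (h _)

end ENNReal

section CoordBox

variable {ι : Type*} [DecidableEq ι]

def coordBox (j : ι) (M : Set ℝ) (R : ℕ) : Set (ι → ℝ) :=
  univ.pi (Function.update (fun _ => Icc (-(R : ℝ)) R) j M)

variable {j : ι} {M : Set ℝ}

theorem mem_coordBox {R : ℕ} {x : ι → ℝ} :
    x ∈ coordBox j M R ↔ x j ∈ M ∧ ∀ k ≠ j, |x k| ≤ R := by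
  refine ⟨fun hx => ⟨by simpa using hx j trivial, fun k hk => ?_⟩, fun hx k _ => ?_⟩
  · simpa [Function.update_of_ne hk, abs_le] using hx k trivial
  · rcases eq_or_ne k j with rfl | hk
    · simpa using hx.1
    · simpa [Function.update_of_ne hk, abs_le] using hx.2 k hk

theorem IsCompact.coordBox (hM : IsCompact M) (R : ℕ) : IsCompact (coordBox j M R) :=
  isCompact_univ_pi fun k => by
    rcases eq_or_ne k j with rfl | hk
    · simpa using hM
    · simpa [hk] using isCompact_Icc

theorem Set.Nonempty.coordBox (hM : M.Nonempty) (R : ℕ) : (coordBox j M R).Nonempty :=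
  univ_pi_nonempty_iff.2 fun k => by
    rcases eq_or_ne k j with rfl | hk
    · simpa using hM
    · simp [hk]

theorem monotone_coordBox : Monotone (coordBox j M) := fun _ _ hRS _ hx =>
  mem_coordBox.2 ⟨(mem_coordBox.1 hx).1,
    fun k hk => ((mem_coordBox.1 hx).2 k hk).trans (Nat.cast_le.2 hRS)⟩

variable [Fintype ι]

theorem iUnion_coordBox : ⋃ R, coordBox j M R = {x | x j ∈ M} := by
  refine Subset.antisymm (iUnion_subset fun R _ hx => (mem_coordBox.1 hx).1) fun x hx => ?_
  obtain ⟨R, hR⟩ := exists_nat_ge (∑ k, |x k|)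
  exact mem_iUnion.2 ⟨R, mem_coordBox.2 ⟨hx, fun k _ =>
    (Finset.single_le_sum (fun k _ => abs_nonneg (x k)) (Finset.mem_univ k)).trans hR⟩⟩

end CoordBox

theorem IsLogConcave.isLogConcaveReal_apply {Ω ι : Type*} [MeasurableSpace Ω] [Fintype ι]
    {P : Measure Ω} {Z : Ω → ι → ℝ} (h : IsLogConcave P Z) (j : ι) :
    IsLogConcaveReal P (fun ω => Z ω j) := by
  classical
  intro K L hK hL hKc hLc t ht
  have hmono (M : Set ℝ) : Monotone fun R => Z ⁻¹' coordBox j M R :=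
    fun _ _ hRS => preimage_mono (monotone_coordBox hRS)
  have hunion (M : Set ℝ) : ⋃ R, Z ⁻¹' coordBox j M R = {ω | Z ω j ∈ M} := by
    rw [← preimage_iUnion, iUnion_coordBox]
    rfl
  have hbox (R : ℕ) : P (Z ⁻¹' coordBox j K R) ^ t * P (Z ⁻¹' coordBox j L R) ^ (1 - t) ≤
      P {ω | Z ω j ∈ t • K + (1 - t) • L} := by
    refine (h _ _ (hK.coordBox R) (hL.coordBox R) (hKc.coordBox R) (hLc.coordBox R) t ht).trans
      (measure_mono ?_)
    rintro ω ⟨_, ⟨x, hx, rfl⟩, _, ⟨y, hy, rfl⟩, hxy⟩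
    simp only [mem_ofPred_eq, ← hxy]
    exact add_mem_add (smul_mem_smul_set (mem_coordBox.1 hx).1)
      (smul_mem_smul_set (mem_coordBox.1 hy).1)
  rw [← hunion K, ← hunion L, (hmono K).measure_iUnion, (hmono L).measure_iUnion,
    ENNReal.iSup_rpow _ ht.1, ENNReal.iSup_rpow _ (sub_nonneg.2 ht.2)]
  exact ENNReal.iSup_mul_iSup_le_of_monotone
    (fun R S hRS => ENNReal.rpow_le_rpow (measure_mono (hmono K hRS)) ht.1)
    (fun R S hRS => ENNReal.rpow_le_rpow (measure_mono (hmono L hRS)) (sub_nonneg.2 ht.2)) hbox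

theorem two_le_abs_of_two_mul_le_abs {s x y : ℝ} (hs : 1 ≤ s) (hx : 2 * s ≤ |x|)
    (hy : |y| ≤ 2) :
    2 ≤ |2 / (s + 1) * x + (1 - 2 / (s + 1)) * y| := by
  set t := 2 / (s + 1)
  have ht0 : 0 ≤ t := by positivity
  have ht1 : t ≤ 1 := (div_le_one (by linarith)).2 (by linarith)
  have hts : t * (s + 1) = 2 := div_mul_cancel₀ 2 (by linarith)
  have := abs_sub_abs_le_abs_sub (t * x) (-((1 - t) * y))
  rw [sub_neg_eq_add, abs_neg, abs_mul, abs_mul, abs_of_nonneg ht0,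
    abs_of_nonneg (sub_nonneg.2 ht1)] at this
  nlinarith [mul_le_mul_of_nonneg_left hx ht0, mul_le_mul_of_nonneg_left hy (sub_nonneg.2 ht1)]

theorem two_mul_add_two_rpow_mul_exp_le {s x : ℝ} (hs : 1 ≤ s) (hx : 0 ≤ x) :
    (2 * x + 2) ^ s * Real.exp (-(x / 2)) ≤ (8 * s) ^ s * Real.exp (-(x / 4)) := by
  have hs0 : 0 < s := by linarith
  have hbase : 2 * x + 2 ≤ 8 * s * Real.exp (x / (4 * s)) := by
    have h1 := Real.add_one_le_exp (x / (4 * s))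
    have h2 : 8 * s * (x / (4 * s) + 1) = 2 * x + 8 * s := by field_simp; ring
    nlinarith
  calc (2 * x + 2) ^ s * Real.exp (-(x / 2))
      ≤ (8 * s * Real.exp (x / (4 * s))) ^ s * Real.exp (-(x / 2)) := by gcongr
    _ = (8 * s) ^ s * Real.exp (-(x / 4)) := by
      rw [Real.mul_rpow (by positivity) (by positivity), ← Real.exp_mul, mul_assoc,
        ← Real.exp_add]
      congr 2
      field_simp
      ring

theorem tsum_ofReal_two_mul_add_two_rpow_mul_exp_le {s : ℝ} (hs : 1 ≤ s) :
    ∑' k : ℕ, ENNReal.ofReal ((2 * k + 2) ^ s * Real.exp (-(k / 2))) ≤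
      ENNReal.ofReal ((40 * s) ^ s) := by
  set ρ := Real.exp (-(1 / 4))
  have hρ : ρ ≤ 4 / 5 := by
    have := Real.add_one_le_exp (1 / 4)
    rw [show ρ = (Real.exp (1 / 4))⁻¹ from Real.exp_neg _,
      inv_le_comm₀ (Real.exp_pos _) (by norm_num)]
    linarith
  have hterm (k : ℕ) : (2 * k + 2) ^ s * Real.exp (-(k / 2)) ≤ (8 * s) ^ s * ρ ^ k := by
    rw [← Real.exp_nat_mul, show (k : ℝ) * -(1 / 4) = -(k / 4) by ring]
    exact two_mul_add_two_rpow_mul_exp_le hs k.cast_nonneg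
  have hgeom : Summable fun k : ℕ => (8 * s) ^ s * ρ ^ k :=
    (summable_geometric_of_lt_one (Real.exp_nonneg _) (by linarith)).mul_left _
  have hsum : ∑' k : ℕ, (8 * s) ^ s * ρ ^ k ≤ (40 * s) ^ s := by
    rw [tsum_mul_left, tsum_geometric_of_lt_one (Real.exp_nonneg _) (by linarith)]
    have h5 : (1 - ρ)⁻¹ ≤ 5 := by
      rw [inv_le_comm₀ (by linarith) (by norm_num)]
      linarith
    have h5s : (5 : ℝ) ≤ 5 ^ s := by
      simpa using Real.rpow_le_rpow_of_exponent_le (by norm_num : (1 : ℝ) ≤ 5) hs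
    calc (8 * s) ^ s * (1 - ρ)⁻¹ ≤ (8 * s) ^ s * 5 ^ s := by gcongr; linarith
      _ = (40 * s) ^ s := by
        rw [← Real.mul_rpow (by positivity) (by norm_num)]
        ring_nf
  calc ∑' k : ℕ, ENNReal.ofReal ((2 * k + 2) ^ s * Real.exp (-(k / 2)))
      ≤ ∑' k : ℕ, ENNReal.ofReal ((8 * s) ^ s * ρ ^ k) :=
        ENNReal.tsum_le_tsum fun k => ENNReal.ofReal_le_ofReal (hterm k)
    _ = ENNReal.ofReal (∑' k : ℕ, (8 * s) ^ s * ρ ^ k) :=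
        (ENNReal.ofReal_tsum_of_nonneg (fun k => by positivity) hgeom).symm
    _ ≤ ENNReal.ofReal ((40 * s) ^ s) := ENNReal.ofReal_le_ofReal hsum

theorem measureReal_two_le_abs_le {Ω : Type*} [MeasurableSpace Ω] {P : Measure Ω}
    [IsFiniteMeasure P] {X : Ω → ℝ} (hvar : ∫ ω, X ω * X ω ∂P = 1) :
    P.real {ω | 2 ≤ |X ω|} ≤ 1 / 4 := by
  have hint : Integrable (fun ω => X ω * X ω) P := by
    by_contra hc
    rw [integral_undef hc] at hvar
    exact zero_ne_one hvar
  have hmarkov := mul_meas_ge_le_integral_of_nonneg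
    (Eventually.of_forall fun ω => mul_self_nonneg (X ω)) hint 4
  have hsub : {ω | 2 ≤ |X ω|} ⊆ {ω | 4 ≤ X ω * X ω} := fun ω hω => by
    have : (2 : ℝ) * 2 ≤ |X ω| * |X ω| := mul_le_mul hω hω zero_le_two (abs_nonneg _)
    simpa [abs_mul_abs_self] using (by linarith : (4 : ℝ) ≤ |X ω| * |X ω|)
  linarith [measureReal_mono hsub (μ := P)]

theorem three_div_four_le_measureReal_Icc {Ω : Type*} [MeasurableSpace Ω] {P : Measure Ω}
    [IsProbabilityMeasure P] {X : Ω → ℝ} (hvar : ∫ ω, X ω * X ω ∂P = 1) :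
    3 / 4 ≤ P.real {ω | X ω ∈ Icc (-2) 2} := by
  have hcover : univ ⊆ {ω | X ω ∈ Icc (-2) 2} ∪ {ω | 2 ≤ |X ω|} := fun ω _ => by
    rcases le_total |X ω| 2 with hω | hω
    · exact Or.inl (abs_le.1 hω)
    · exact Or.inr hω
  linarith [measureReal_mono hcover (μ := P), measureReal_union_le (μ := P)
    {ω | X ω ∈ Icc (-2) 2} {ω | 2 ≤ |X ω|}, probReal_univ (μ := P),
    measureReal_two_le_abs_le hvar (P := P)]

namespace IsLogConcaveReal

variable {Ω : Type*} [MeasurableSpace Ω] {P : Measure Ω} {X : Ω → ℝ}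

theorem measureReal_le [IsFiniteMeasure P] (h : IsLogConcaveReal P X) {K L : Set ℝ}
    (hK : K.Nonempty) (hL : L.Nonempty) (hKc : IsCompact K) (hLc : IsCompact L) {t : ℝ}
    (ht : t ∈ Icc (0 : ℝ) 1) :
    P.real {ω | X ω ∈ K} ^ t * P.real {ω | X ω ∈ L} ^ (1 - t) ≤
      P.real {ω | X ω ∈ t • K + (1 - t) • L} := by
  simpa only [measureReal_def, ENNReal.toReal_mul, ENNReal.toReal_rpow] using
    ENNReal.toReal_mono (measure_ne_top _ _) (h K L hK hL hKc hLc t ht)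

variable [IsProbabilityMeasure P]

theorem measureReal_le_of_subset (h : IsLogConcaveReal P X) (hvar : ∫ ω, X ω * X ω ∂P = 1)
    {s : ℝ} (hs : 1 ≤ s) {K : Set ℝ} (hKc : IsCompact K) (hKs : K ⊆ {x | 2 * s ≤ |x|}) :
    P.real {ω | X ω ∈ K} ≤ Real.exp (-(s / 2)) := by
  rcases K.eq_empty_or_nonempty with rfl | hK
  · simp [Real.exp_nonneg]
  set t := 2 / (s + 1)
  have ht0 : 0 < t := by positivity
  have ht1 : t ≤ 1 := (div_le_one (by linarith)).2 (by linarith)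
  have htail := measureReal_two_le_abs_le hvar
  have hcenter := three_div_four_le_measureReal_Icc hvar
  have hsum : {ω | X ω ∈ t • K + (1 - t) • Icc (-2) 2} ⊆ {ω | 2 ≤ |X ω|} := by
    rintro ω ⟨_, ⟨x, hx, rfl⟩, _, ⟨y, hy, rfl⟩, hxy⟩
    simpa only [mem_ofPred_eq, ← hxy, smul_eq_mul] using
      two_le_abs_of_two_mul_le_abs hs (hKs hx) (abs_le.2 hy)
  set a := P.real {ω | X ω ∈ K}
  set b := P.real {ω | X ω ∈ Icc (-2) 2}
  have hlc : a ^ t * b ^ (1 - t) ≤ 1 / 4 :=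
    (h.measureReal_le hK (nonempty_Icc.2 (by norm_num)) hKc isCompact_Icc ⟨ht0.le, ht1⟩).trans
      ((measureReal_mono hsum).trans htail)
  have hb : 3 / 4 ≤ b ^ (1 - t) := hcenter.trans <| by
    simpa using Real.rpow_le_rpow_of_exponent_ge (by linarith) measureReal_le_one
      (by linarith : 1 - t ≤ 1)
  have hat : a ^ t ≤ 3⁻¹ := by nlinarith [Real.rpow_nonneg (measureReal_nonneg : 0 ≤ a) t]
  have hlog3 : 1 ≤ Real.log 3 :=
    (Real.le_log_iff_exp_le (by norm_num)).2 (Real.exp_one_lt_d9.le.trans (by norm_num))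
  have hinv : t⁻¹ = (s + 1) / 2 := by simp [t]
  calc a = (a ^ t) ^ t⁻¹ := (Real.rpow_rpow_inv measureReal_nonneg ht0.ne').symm
    _ ≤ 3⁻¹ ^ t⁻¹ := Real.rpow_le_rpow (by positivity) hat (by positivity)
    _ = Real.exp (-(Real.log 3 * ((s + 1) / 2))) := by
      rw [Real.rpow_def_of_pos (by norm_num), Real.log_inv, hinv, neg_mul]
    _ ≤ Real.exp (-(s / 2)) := Real.exp_le_exp.2 (by nlinarith)

theorem measure_two_mul_le_abs_le (h : IsLogConcaveReal P X)
    (hvar : ∫ ω, X ω * X ω ∂P = 1) {s : ℝ} (hs : 1 ≤ s) :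
    P {ω | 2 * s ≤ |X ω|} ≤ ENNReal.ofReal (Real.exp (-(s / 2))) := by
  let K (R : ℕ) : Set ℝ := {x | 2 * s ≤ |x|} ∩ Icc (-(R : ℝ)) R
  have hmono : Monotone fun R => {ω | X ω ∈ K R} := fun R S hRS _ hω =>
    ⟨hω.1, Icc_subset_Icc (neg_le_neg (Nat.cast_le.2 hRS)) (Nat.cast_le.2 hRS) hω.2⟩
  have hunion : ⋃ R, {ω | X ω ∈ K R} = {ω | 2 * s ≤ |X ω|} := by
    refine Subset.antisymm (iUnion_subset fun R _ hω => hω.1) fun ω hω => ?_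
    obtain ⟨R, hR⟩ := exists_nat_ge |X ω|
    exact mem_iUnion.2 ⟨R, hω, abs_le.1 hR⟩
  rw [← hunion, hmono.measure_iUnion]
  refine iSup_le fun R => ?_
  rw [← ofReal_measureReal]
  exact ENNReal.ofReal_le_ofReal (h.measureReal_le_of_subset hvar hs
    (isCompact_Icc.inter_left (isClosed_le continuous_const continuous_abs)) inter_subset_left)

theorem lintegral_enorm_rpow_le (h : IsLogConcaveReal P X) (hX : Measurable X)
    (hvar : ∫ ω, X ω * X ω ∂P = 1) {s : ℝ} (hs : 1 ≤ s) :
    ∫⁻ ω, ‖X ω‖ₑ ^ s ∂P ≤ ENNReal.ofReal ((40 * s) ^ s) := by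
  let A (k : ℕ) : Set Ω := {ω | 2 * k ≤ |X ω|}
  have hA (k : ℕ) : MeasurableSet (A k) := measurableSet_le measurable_const hX.abs
  have htail (k : ℕ) : P (A k) ≤ ENNReal.ofReal (Real.exp (-(k / 2))) := by
    rcases k.eq_zero_or_pos with rfl | hk
    · simpa using prob_le_one
    · exact h.measure_two_mul_le_abs_le hvar (Nat.one_le_cast.2 hk)
  let f (k : ℕ) : Ω → ℝ≥0∞ := (A k).indicator fun _ => ENNReal.ofReal ((2 * k + 2) ^ s)
  have hpoint (ω : Ω) : ‖X ω‖ₑ ^ s ≤ ∑' k, f k ω := by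
    set k := ⌊|X ω| / 2⌋₊
    have hk : 2 * k ≤ |X ω| := by
      linarith [Nat.floor_le (div_nonneg (abs_nonneg (X ω)) zero_le_two)]
    refine le_trans ?_ (ENNReal.le_tsum k)
    rw [show f k ω = ENNReal.ofReal ((2 * k + 2) ^ s) from indicator_of_mem (show ω ∈ A k from hk) _,
      Real.enorm_eq_ofReal_abs,
      ENNReal.ofReal_rpow_of_nonneg (abs_nonneg _) (by linarith)]
    exact ENNReal.ofReal_le_ofReal (Real.rpow_le_rpow (abs_nonneg _)
      (by linarith [Nat.lt_floor_add_one (|X ω| / 2)]) (by linarith))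
  calc ∫⁻ ω, ‖X ω‖ₑ ^ s ∂P
      ≤ ∫⁻ ω, ∑' k, f k ω ∂P := lintegral_mono hpoint
    _ = ∑' k : ℕ, ENNReal.ofReal ((2 * k + 2) ^ s) * P (A k) := by
        rw [lintegral_tsum fun k => (measurable_const.indicator (hA k)).aemeasurable]
        simp_rw [lintegral_indicator_const (hA _)]
    _ ≤ ∑' k : ℕ, ENNReal.ofReal ((2 * k + 2) ^ s * Real.exp (-(k / 2))) :=
        ENNReal.tsum_le_tsum fun k => by
          rw [ENNReal.ofReal_mul (by positivity)]
          gcongr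
          exact htail k
    _ ≤ ENNReal.ofReal ((40 * s) ^ s) := tsum_ofReal_two_mul_add_two_rpow_mul_exp_le hs

theorem eLpNorm'_le (h : IsLogConcaveReal P X) (hX : Measurable X)
    (hvar : ∫ ω, X ω * X ω ∂P = 1) {s : ℝ} (hs : 1 ≤ s) :
    eLpNorm' X s P ≤ ENNReal.ofReal (40 * s) := by
  have hs0 : 0 < s := by linarith
  calc (∫⁻ ω, ‖X ω‖ₑ ^ s ∂P) ^ (1 / s)
      ≤ ENNReal.ofReal ((40 * s) ^ s) ^ (1 / s) := by
        gcongr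
        exact h.lintegral_enorm_rpow_le hX hvar hs
    _ = ENNReal.ofReal (40 * s) := by
        rw [ENNReal.ofReal_rpow_of_nonneg (by positivity) (by positivity), ← Real.rpow_mul
          (by positivity), mul_one_div_cancel hs0.ne', Real.rpow_one]

end IsLogConcaveReal

theorem eLpNorm'_sum_rpow_mul_rpow_le {Ω κ : Type*} [MeasurableSpace Ω] {P : Measure Ω}
    [Fintype κ] (a : κ → ℝ) {W : κ → Ω → ℝ} (hW : ∀ j, AEStronglyMeasurable (W j) P)
    {p q γ : ℝ} (hp : 0 < p) (hpq : p ≤ q) (hγ : 0 < γ) {M : ℝ≥0∞}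
    (hM : ∀ j, eLpNorm' (W j) (q * γ) P ≤ M) :
    eLpNorm' (fun ω => (∑ j, |a j| ^ p * |W j ω| ^ (p * γ)) ^ (1 / p)) q P ≤
      M ^ γ * ENNReal.ofReal ((∑ j, |a j| ^ p) ^ (1 / p)) := by
  have hr : 1 ≤ q * (1 / p) := by rw [mul_one_div, one_le_div hp]; exact hpq
  let f (j : κ) (ω : Ω) : ℝ := |a j| ^ p * ‖W j ω‖ ^ (p * γ)
  have hf (j : κ) : AEStronglyMeasurable (f j) P :=
    (((hW j).norm.aemeasurable.pow_const _).const_mul _).aestronglyMeasurable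
  have hS : (fun ω => (∑ j, |a j| ^ p * |W j ω| ^ (p * γ)) ^ (1 / p)) =
      fun ω => ‖(∑ j, f j) ω‖ ^ (1 / p) := by
    ext ω
    rw [Real.norm_of_nonneg (by simp only [Finset.sum_apply, f]; positivity)]
    simp [f]
  have hterm (j : κ) :
      eLpNorm' (f j) (q * (1 / p)) P ≤ ENNReal.ofReal (|a j| ^ p) * M ^ (p * γ) := by
    have hfj : f j = (|a j| ^ p) • fun ω => ‖W j ω‖ ^ (p * γ) := rfl
    rw [hfj, eLpNorm'_const_smul _ (by positivity), eLpNorm'_norm_rpow _ _ _ (by positivity),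
      Real.enorm_of_nonneg (by positivity), show q * (1 / p) * (p * γ) = q * γ by field_simp]
    gcongr
    exact hM j
  rw [hS, eLpNorm'_norm_rpow _ _ _ (by positivity)]
  calc eLpNorm' (∑ j, f j) (q * (1 / p)) P ^ (1 / p)
      ≤ (∑ j, ENNReal.ofReal (|a j| ^ p) * M ^ (p * γ)) ^ (1 / p) := by
        gcongr
        exact (eLpNorm'_sum_le (fun j _ => hf j) hr).trans (Finset.sum_le_sum fun j _ => hterm j)
    _ = M ^ γ * ENNReal.ofReal ((∑ j, |a j| ^ p) ^ (1 / p)) := by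
        rw [← Finset.sum_mul, ← ENNReal.ofReal_sum_of_nonneg (fun j _ => by positivity),
          ENNReal.mul_rpow_of_nonneg _ _ (by positivity), ← ENNReal.rpow_mul,
          ENNReal.ofReal_rpow_of_nonneg (by positivity) (by positivity), mul_comm,
          show p * γ * (1 / p) = γ by field_simp]

theorem eLpNorm'_iSup_le {Ω ι : Type*} [MeasurableSpace Ω] {P : Measure Ω} [Fintype ι]
    [Nonempty ι] {Y : ι → Ω → ℝ} (hY : ∀ i, AEMeasurable (Y i) P) {q : ℝ} (hq : 0 < q)
    {M : ℝ≥0∞} (hM : ∀ i, eLpNorm' (Y i) q P ≤ M) :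
    eLpNorm' (fun ω => ⨆ i, Y i ω) q P ≤ (Fintype.card ι : ℝ≥0∞) ^ (1 / q) * M := by
  have hpoint (ω : Ω) : ‖⨆ i, Y i ω‖ₑ ^ q ≤ ∑ i, ‖Y i ω‖ₑ ^ q := by
    obtain ⟨i, hi⟩ := exists_eq_ciSup_of_finite (f := fun i => Y i ω)
    rw [← hi]
    exact Finset.single_le_sum (f := fun i => ‖Y i ω‖ₑ ^ q) (fun _ _ => zero_le)
      (Finset.mem_univ i)
  calc (∫⁻ ω, ‖⨆ i, Y i ω‖ₑ ^ q ∂P) ^ (1 / q)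
      ≤ (∑ i, ∫⁻ ω, ‖Y i ω‖ₑ ^ q ∂P) ^ (1 / q) := by
        rw [← lintegral_finsetSum' _ fun i _ => (hY i).enorm.pow_const q]
        gcongr
        exact hpoint _
    _ ≤ (∑ _i : ι, M ^ q) ^ (1 / q) := by
        gcongr with i
        rw [lintegral_rpow_enorm_eq_rpow_eLpNorm' hq]
        gcongr
        exact hM i
    _ = (Fintype.card ι : ℝ≥0∞) ^ (1 / q) * M := by
        rw [Finset.sum_const, Finset.card_univ, nsmul_eq_mul, ENNReal.mul_rpow_of_nonneg _ _
          (by positivity), ← ENNReal.rpow_mul, mul_one_div_cancel hq.ne', ENNReal.rpow_one]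

theorem integral_le_of_eLpNorm'_le {Ω : Type*} [MeasurableSpace Ω] {P : Measure Ω}
    [IsProbabilityMeasure P] {f : Ω → ℝ} (hf : AEStronglyMeasurable f P) {q : ℝ}
    (hq : 1 ≤ q) {c : ℝ} (hc : 0 ≤ c) (h : eLpNorm' f q P ≤ ENNReal.ofReal c) :
    ∫ ω, f ω ∂P ≤ c := by
  have hnorm : ENNReal.ofReal ‖∫ ω, f ω ∂P‖ ≤ ENNReal.ofReal c :=
    calc ENNReal.ofReal ‖∫ ω, f ω ∂P‖ = ‖∫ ω, f ω ∂P‖ₑ := ofReal_norm _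
      _ ≤ ∫⁻ ω, ‖f ω‖ₑ ∂P := enorm_integral_le_lintegral_enorm f
      _ = eLpNorm' f 1 P := by simp [eLpNorm']
      _ ≤ eLpNorm' f q P := eLpNorm'_le_eLpNorm'_of_exponent_le one_pos hq P hf
      _ ≤ ENNReal.ofReal c := h
  exact (le_abs_self _).trans ((ENNReal.ofReal_le_ofReal_iff hc).1 hnorm)

theorem rpow_one_div_add_log_mul_rpow_le {x p γ : ℝ} (hx : 2 ≤ x) (hp : 1 ≤ p)
    (hγ : 0 < γ) :
    x ^ (1 / (p + Real.log x)) * (40 * ((p + Real.log x) * γ)) ^ γ ≤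
      3 * (120 * p * γ) ^ γ * Real.log x ^ γ := by
  have hlog : 1 / 2 ≤ Real.log x :=
    (by linarith [Real.log_two_gt_d9] : (1 : ℝ) / 2 ≤ Real.log 2).trans
      (Real.log_le_log two_pos hx)
  have hroot : x ^ (1 / (p + Real.log x)) ≤ 3 := by
    rw [Real.rpow_def_of_pos (by linarith)]
    calc Real.exp (Real.log x * (1 / (p + Real.log x))) ≤ Real.exp 1 := by
          gcongr
          rw [mul_one_div, div_le_one (by linarith)]
          linarith
      _ ≤ 3 := by linarith [Real.exp_one_lt_d9]
  have hlin : 40 * ((p + Real.log x) * γ) ≤ 120 * p * γ * Real.log x := by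
    have : p + Real.log x ≤ 3 * p * Real.log x := by nlinarith
    nlinarith
  calc x ^ (1 / (p + Real.log x)) * (40 * ((p + Real.log x) * γ)) ^ γ
      ≤ 3 * (120 * p * γ * Real.log x) ^ γ := by gcongr
    _ = 3 * (120 * p * γ) ^ γ * Real.log x ^ γ := by
      rw [Real.mul_rpow (by positivity) (by linarith)]
      ring

theorem statement14 (γ p : ℝ) (hγ : 0 < γ) (hp : max 1 (1 / γ) ≤ p) :
    ∃ C : ℝ, 0 < C ∧
      ∀ (m n : ℕ), 2 ≤ m → 1 ≤ n →
      ∀ (Ω : Type) [MeasurableSpace Ω] (P : Measure Ω), IsProbabilityMeasure P →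
      ∀ Z : Ω → Fin m → Fin n → ℝ, Measurable Z →
        (∀ i, IsLogConcave P (fun ω => Z ω i)) →
        (∀ i, IsIsotropic P (fun ω => Z ω i)) →
      ∀ B : Fin m → Fin n → ℝ,
        (∫ ω, ⨆ i, (∑ j, |B i j| ^ p * |Z ω i j| ^ (p * γ)) ^ (1 / p) ∂P) ≤
          C * (Real.log m) ^ γ * ⨆ i, (∑ j, |B i j| ^ p) ^ (1 / p) := by
  have hp1 : 1 ≤ p := (le_max_left _ _).trans hp
  have hpγ : 1 ≤ p * γ := (div_le_iff₀ hγ).1 ((le_max_right _ _).trans hp)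
  refine ⟨3 * (120 * p * γ) ^ γ, by positivity, ?_⟩
  intro m n hm _ Ω _ P _ Z hZ hlc hiso B
  have : Nonempty (Fin m) := ⟨⟨0, by omega⟩⟩
  have hm2 : (2 : ℝ) ≤ m := by exact_mod_cast hm
  set q := p + Real.log m
  have hpq : p ≤ q := le_add_of_nonneg_right (Real.log_nonneg (by linarith))
  have hZ_apply (i j) : Measurable fun ω => Z ω i j := by fun_prop
  have hmoment (i j) :
      eLpNorm' (fun ω => Z ω i j) (q * γ) P ≤ ENNReal.ofReal (40 * (q * γ)) :=
    ((hlc i).isLogConcaveReal_apply j).eLpNorm'_le (hZ_apply i j)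
      (by simpa using (hiso i).2 j j) (hpγ.trans (by gcongr))
  set b := ⨆ i, (∑ j, |B i j| ^ p) ^ (1 / p)
  have hb : 0 ≤ b := Real.iSup_nonneg fun i => by positivity
  have hrow (i) :
      eLpNorm' (fun ω => (∑ j, |B i j| ^ p * |Z ω i j| ^ (p * γ)) ^ (1 / p)) q P ≤
      ENNReal.ofReal (40 * (q * γ)) ^ γ * ENNReal.ofReal b :=
    (eLpNorm'_sum_rpow_mul_rpow_le (B i) (fun j => (hZ_apply i j).aestronglyMeasurable)
      (by linarith) hpq hγ (hmoment i)).trans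
      (by gcongr; exact le_ciSup (Finite.bddAbove_range fun i => (∑ j, |B i j| ^ p) ^ (1 / p)) i)
  have hconst : (m : ℝ≥0∞) ^ (1 / q) * ENNReal.ofReal (40 * (q * γ)) ^ γ ≤
      ENNReal.ofReal (3 * (120 * p * γ) ^ γ * Real.log m ^ γ) := by
    rw [← ENNReal.ofReal_natCast, ENNReal.ofReal_rpow_of_nonneg (by positivity) (by positivity),
      ENNReal.ofReal_rpow_of_nonneg (by positivity) hγ.le, ← ENNReal.ofReal_mul (by positivity)]
    exact ENNReal.ofReal_le_ofReal (rpow_one_div_add_log_mul_rpow_le hm2 hp1 hγ)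
  have hmax := eLpNorm'_iSup_le (fun i => by fun_prop) (by linarith) hrow
  refine integral_le_of_eLpNorm'_le (Measurable.iSup fun i => by fun_prop).aestronglyMeasurable
    (hp1.trans hpq) (by positivity) (hmax.trans ?_)
  rw [Fintype.card_fin, ← mul_assoc, ENNReal.ofReal_mul' hb]
  gcongr

end
end

section
/- Let m ≥ 2, n ≥ 1, γ > 0, and p ≥ max(1, 1/γ). Let B = (B_{ij}) be a deterministic m×n real matrix and let (G'_{ij})_{i≤m, j≤n} be i.i.d. standard Gaussian random variables. Then there exists a constant C > 0 depending only on p and γ such that 𝔼 max_{i≤m} ( Σ_{j=1}^n |B_{ij}|^p · |G'_{ij}|^{pγ} )^{1/p} ≤ C · (log m)^{γ/2} · max_{i≤m} (Σ_{j=1}^n |B_{ij}|^p)^{1/p}. -/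
open MeasureTheory ProbabilityTheory Real
open scoped Pointwise

noncomputable section

/-! With `S i = ∑ j, |B i j| ^ p * |G' i j| ^ (p * γ)` and `q ≥ p`, the maximum of the
`S i ^ (1 / p)` is at most their `ℓ^q` norm, so by Jensen `𝔼 max_i S_i^{1/p} ≤ (∑ i, 𝔼 S_i^{q/p})^{1/q}`.
Minkowski's inequality in `L^{q/p}` bounds `𝔼 S_i^{q/p}` by `(∑ j, |B i j| ^ p)^{q/p} 𝔼 |G|^{qγ}`,
and comparing `|x|^s` with `exp (x²/4)` gives `𝔼 |G|^s ≤ √2 (2s)^{s/2}`. The choice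
`q = p log₂ m` makes `m^{1/q} = 2^{1/p} ≤ 2` and turns `(2qγ)^{γ/2}` into a multiple of
`(log m)^{γ/2}`. -/

open scoped ENNReal

section LintegralMoments

variable {Ω : Type*} [MeasurableSpace Ω] {μ : Measure Ω}

lemma lintegral_rpow_one_div_le_rpow_lintegral [IsProbabilityMeasure μ] {f : Ω → ℝ≥0∞}
    (hf : AEMeasurable f μ) {q : ℝ} (hq : 1 ≤ q) :
    ∫⁻ ω, f ω ^ (1 / q) ∂μ ≤ (∫⁻ ω, f ω ∂μ) ^ (1 / q) := by
  have hq0 : 0 < q := zero_lt_one.trans_le hq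
  have h := eLpNorm'_le_eLpNorm'_of_exponent_le zero_lt_one hq μ
    (f := fun ω => f ω ^ (1 / q)) (hf.pow_const _).aestronglyMeasurable
  simpa [eLpNorm', ← ENNReal.rpow_mul, hq0.ne'] using h

lemma lintegral_iSup_le_card_rpow_mul [IsProbabilityMeasure μ] {ι : Type*} [Fintype ι]
    {X : ι → Ω → ℝ≥0∞} (hX : ∀ i, AEMeasurable (X i) μ) {q : ℝ} (hq : 1 ≤ q) {A : ℝ≥0∞}
    (hA : ∀ i, ∫⁻ ω, X i ω ^ q ∂μ ≤ A ^ q) :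
    ∫⁻ ω, ⨆ i, X i ω ∂μ ≤ (Fintype.card ι : ℝ≥0∞) ^ (1 / q) * A := by
  have hq0 : q ≠ 0 := (zero_lt_one.trans_le hq).ne'
  have hsup : ∀ ω, ⨆ i, X i ω ≤ (∑ i, X i ω ^ q) ^ (1 / q) := fun ω => iSup_le fun i =>
    calc X i ω = (X i ω ^ q) ^ (1 / q) := by rw [one_div, ENNReal.rpow_rpow_inv hq0]
      _ ≤ (∑ i, X i ω ^ q) ^ (1 / q) := by
          gcongr
          exact Finset.single_le_sum (f := fun i => X i ω ^ q) (fun _ _ => zero_le)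
            (Finset.mem_univ i)
  calc ∫⁻ ω, ⨆ i, X i ω ∂μ ≤ ∫⁻ ω, (∑ i, X i ω ^ q) ^ (1 / q) ∂μ := lintegral_mono hsup
    _ ≤ (∫⁻ ω, ∑ i, X i ω ^ q ∂μ) ^ (1 / q) :=
        lintegral_rpow_one_div_le_rpow_lintegral
          (Finset.aemeasurable_fun_sum _ fun i _ => (hX i).pow_const q) hq
    _ = (∑ i, ∫⁻ ω, X i ω ^ q ∂μ) ^ (1 / q) := by
        rw [lintegral_finsetSum' _ fun i _ => (hX i).pow_const q]
    _ ≤ (∑ _i : ι, A ^ q) ^ (1 / q) := by gcongr with i; exact hA i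
    _ = (Fintype.card ι : ℝ≥0∞) ^ (1 / q) * A := by
        rw [Finset.sum_const, Finset.card_univ, nsmul_eq_mul,
          ENNReal.mul_rpow_of_nonneg _ _ (by positivity), one_div, ENNReal.rpow_rpow_inv hq0]

lemma lintegral_sum_mul_rpow_le {κ : Type*} (s : Finset κ) {r : ℝ} (hr : 1 ≤ r) (b : κ → ℝ≥0∞)
    {Y : κ → Ω → ℝ≥0∞} (hY : ∀ j, AEMeasurable (Y j) μ) {K : ℝ≥0∞}
    (hK : ∀ j, ∫⁻ ω, Y j ω ^ r ∂μ ≤ K) :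
    ∫⁻ ω, (∑ j ∈ s, b j * Y j ω) ^ r ∂μ ≤ (∑ j ∈ s, b j) ^ r * K := by
  have hr0 : 0 < r := zero_lt_one.trans_le hr
  have hterm : ∀ j, eLpNorm' (fun ω => b j * Y j ω) r μ ≤ b j * K ^ (1 / r) := fun j =>
    calc eLpNorm' (fun ω => b j * Y j ω) r μ = (b j ^ r * ∫⁻ ω, Y j ω ^ r ∂μ) ^ (1 / r) := by
          simp only [eLpNorm', enorm_eq_self, ENNReal.mul_rpow_of_nonneg _ _ hr0.le]
          rw [lintegral_const_mul'' _ ((hY j).pow_const r)]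
      _ ≤ (b j ^ r * K) ^ (1 / r) := by gcongr; exact hK j
      _ = b j * K ^ (1 / r) := by
          rw [ENNReal.mul_rpow_of_nonneg _ _ (by positivity), one_div,
            ENNReal.rpow_rpow_inv hr0.ne']
  have hsum : eLpNorm' (∑ j ∈ s, fun ω => b j * Y j ω) r μ ≤ (∑ j ∈ s, b j) * K ^ (1 / r) :=
    calc _ ≤ ∑ j ∈ s, eLpNorm' (fun ω => b j * Y j ω) r μ :=
          eLpNorm'_sum_le (fun j _ => ((hY j).const_mul _).aestronglyMeasurable) hr
      _ ≤ ∑ j ∈ s, b j * K ^ (1 / r) := Finset.sum_le_sum fun j _ => hterm j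
      _ = (∑ j ∈ s, b j) * K ^ (1 / r) := (Finset.sum_mul ..).symm
  calc ∫⁻ ω, (∑ j ∈ s, b j * Y j ω) ^ r ∂μ
      = eLpNorm' (∑ j ∈ s, fun ω => b j * Y j ω) r μ ^ r := by
        rw [eLpNorm', one_div, ENNReal.rpow_inv_rpow hr0.ne']
        simp only [Finset.sum_apply, enorm_eq_self]
    _ ≤ ((∑ j ∈ s, b j) * K ^ (1 / r)) ^ r := by gcongr
    _ = (∑ j ∈ s, b j) ^ r * K := by
        rw [ENNReal.mul_rpow_of_nonneg _ _ hr0.le, one_div, ENNReal.rpow_inv_rpow hr0.ne']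

lemma lintegral_iSup_sum_mul_rpow_le [IsProbabilityMeasure μ] {ι κ : Type*} [Fintype ι]
    [Fintype κ] {p q : ℝ} (hp : 0 < p) (hpq : p ≤ q) (hq : 1 ≤ q) (b : ι → κ → ℝ≥0∞)
    {Y : ι → κ → Ω → ℝ≥0∞} (hY : ∀ i j, AEMeasurable (Y i j) μ) {K : ℝ≥0∞}
    (hK : ∀ i j, ∫⁻ ω, Y i j ω ^ (q / p) ∂μ ≤ K) :
    ∫⁻ ω, ⨆ i, (∑ j, b i j * Y i j ω) ^ (1 / p) ∂μ ≤
      (Fintype.card ι : ℝ≥0∞) ^ (1 / q) * (K ^ (1 / q) * ⨆ i, (∑ j, b i j) ^ (1 / p)) := by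
  set M := ⨆ i, (∑ j, b i j) ^ (1 / p)
  refine lintegral_iSup_le_card_rpow_mul
    (fun i => (Finset.aemeasurable_fun_sum _ fun j _ => (hY i j).const_mul _).pow_const _) hq
    fun i => ?_
  calc ∫⁻ ω, ((∑ j, b i j * Y i j ω) ^ (1 / p)) ^ q ∂μ
      = ∫⁻ ω, (∑ j, b i j * Y i j ω) ^ (q / p) ∂μ := by
        simp_rw [← ENNReal.rpow_mul, one_div_mul_eq_div]
    _ ≤ (∑ j, b i j) ^ (q / p) * K :=
        lintegral_sum_mul_rpow_le _ ((one_le_div hp).2 hpq) _ (hY i) (hK i)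
    _ = ((∑ j, b i j) ^ (1 / p)) ^ q * K := by rw [← ENNReal.rpow_mul, one_div_mul_eq_div]
    _ ≤ M ^ q * K := by gcongr; exact le_iSup (fun i => (∑ j, b i j) ^ (1 / p)) i
    _ = (K ^ (1 / q) * M) ^ q := by
        rw [ENNReal.mul_rpow_of_nonneg _ _ (by linarith), one_div,
          ENNReal.rpow_inv_rpow (by linarith), mul_comm]

lemma integral_le_of_lintegral_ofReal_le {f : Ω → ℝ} (hf : ∀ ω, 0 ≤ f ω) {b : ℝ} (hb : 0 ≤ b)
    (h : ∫⁻ ω, ENNReal.ofReal (f ω) ∂μ ≤ ENNReal.ofReal b) : ∫ ω, f ω ∂μ ≤ b := by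
  refine (ENNReal.ofReal_le_ofReal_iff hb).1 ?_
  calc ENNReal.ofReal (∫ ω, f ω ∂μ) ≤ ‖∫ ω, f ω ∂μ‖ₑ := Real.ofReal_le_enorm _
    _ ≤ ∫⁻ ω, ‖f ω‖ₑ ∂μ := enorm_integral_le_lintegral_enorm f
    _ = ∫⁻ ω, ENNReal.ofReal (f ω) ∂μ := by simp_rw [Real.enorm_of_nonneg (hf _)]
    _ ≤ ENNReal.ofReal b := h

end LintegralMoments

lemma rpow_le_rpow_mul_exp {y t : ℝ} (hy : 0 ≤ y) (ht : 0 < t) : y ^ t ≤ t ^ t * exp y := by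
  rcases hy.eq_or_lt with rfl | hy
  · rw [zero_rpow ht.ne']
    positivity
  calc y ^ t = t ^ t * (y / t) ^ t := by
        rw [← mul_rpow ht.le (by positivity), mul_div_cancel₀ _ ht.ne']
    _ ≤ t ^ t * exp y := by
        gcongr
        rw [rpow_def_of_pos (by positivity), exp_le_exp]
        calc log (y / t) * t ≤ y / t * t := by gcongr; exact log_le_self (by positivity)
          _ = y := div_mul_cancel₀ _ ht.ne'

lemma abs_rpow_le_mul_exp_sq_div_four (x : ℝ) {s : ℝ} (hs : 0 < s) :
    |x| ^ s ≤ (2 * s) ^ (s / 2) * exp (x ^ 2 / 4) :=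
  calc |x| ^ s = 4 ^ (s / 2) * (x ^ 2 / 4) ^ (s / 2) := by
        rw [← mul_rpow (by norm_num) (by positivity), mul_div_cancel₀ _ (by norm_num), ← sq_abs,
          ← rpow_natCast, ← rpow_mul (abs_nonneg x)]
        congr 1
        push_cast
        ring
    _ ≤ 4 ^ (s / 2) * ((s / 2) ^ (s / 2) * exp (x ^ 2 / 4)) := by
        gcongr
        exact rpow_le_rpow_mul_exp (by positivity) (by positivity)
    _ = (2 * s) ^ (s / 2) * exp (x ^ 2 / 4) := by
        rw [← mul_assoc, ← mul_rpow (by norm_num) (by positivity)]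
        ring_nf

lemma lintegral_exp_sq_div_four_gaussianReal :
    ∫⁻ x, ENNReal.ofReal (exp (x ^ 2 / 4)) ∂gaussianReal 0 1 = ENNReal.ofReal √2 := by
  have hdensity : ∀ x, gaussianPDF 0 1 x * ENNReal.ofReal (exp (x ^ 2 / 4)) =
      ENNReal.ofReal ((√(2 * π))⁻¹ * exp (-(1 / 4) * x ^ 2)) := fun x => by
    rw [gaussianPDF, ← ENNReal.ofReal_mul (gaussianPDFReal_nonneg _ _ _), gaussianPDFReal]
    congr 1
    rw [mul_assoc, ← exp_add]
    simp only [NNReal.coe_one, mul_one, sub_zero]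
    ring_nf
  rw [gaussianReal_of_var_ne_zero _ one_ne_zero,
    lintegral_withDensity_eq_lintegral_mul _ (measurable_gaussianPDF 0 1) (by fun_prop)]
  simp only [Pi.mul_apply, hdensity]
  rw [← ofReal_integral_eq_lintegral_ofReal
      ((integrable_exp_neg_mul_sq (by norm_num)).const_mul _) (ae_of_all _ fun _ => by positivity),
    integral_const_mul, integral_gaussian]
  congr 1
  rw [show π / (1 / 4) = 2 * (2 * π) by ring, sqrt_mul zero_le_two (2 * π),
    mul_comm √2, inv_mul_cancel_left₀ (sqrt_pos.2 (by positivity)).ne']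

lemma lintegral_abs_rpow_gaussianReal_le {s : ℝ} (hs : 0 < s) :
    ∫⁻ x, ENNReal.ofReal (|x| ^ s) ∂gaussianReal 0 1 ≤
      ENNReal.ofReal ((2 * s) ^ (s / 2) * √2) :=
  calc ∫⁻ x, ENNReal.ofReal (|x| ^ s) ∂gaussianReal 0 1
      ≤ ∫⁻ x, ENNReal.ofReal ((2 * s) ^ (s / 2)) * ENNReal.ofReal (exp (x ^ 2 / 4))
          ∂gaussianReal 0 1 := lintegral_mono fun x => by
        rw [← ENNReal.ofReal_mul (by positivity)]
        exact ENNReal.ofReal_le_ofReal (abs_rpow_le_mul_exp_sq_div_four x hs)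
    _ = ENNReal.ofReal ((2 * s) ^ (s / 2) * √2) := by
        rw [lintegral_const_mul _ (by fun_prop), lintegral_exp_sq_div_four_gaussianReal,
          ← ENNReal.ofReal_mul (by positivity)]

lemma lintegral_abs_rpow_le_of_map_eq_gaussianReal {Ω : Type*} [MeasurableSpace Ω]
    {P : Measure Ω} {X : Ω → ℝ} (hX : Measurable X) (hlaw : P.map X = gaussianReal 0 1)
    {s : ℝ} (hs : 0 < s) :
    ∫⁻ ω, ENNReal.ofReal (|X ω| ^ s) ∂P ≤ ENNReal.ofReal ((2 * s) ^ (s / 2) * √2) := by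
  rw [← lintegral_map (f := fun x => ENNReal.ofReal (|x| ^ s)) (by fun_prop) hX, hlaw]
  exact lintegral_abs_rpow_gaussianReal_le hs

lemma lintegral_iSup_sum_mul_abs_gaussian_rpow_le {Ω ι κ : Type*} [MeasurableSpace Ω]
    {P : Measure Ω} [IsProbabilityMeasure P] [Fintype ι] [Fintype κ] {G : Ω → ι → κ → ℝ}
    (hG : ∀ i j, Measurable fun ω => G ω i j)
    (hlaw : ∀ i j, P.map (fun ω => G ω i j) = gaussianReal 0 1) (b : ι → κ → ℝ≥0∞)
    {p q γ : ℝ} (hp : 0 < p) (hpq : p ≤ q) (hq : 1 ≤ q) (hγ : 0 < γ) :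
    ∫⁻ ω, ⨆ i, (∑ j, b i j * ENNReal.ofReal (|G ω i j| ^ (p * γ))) ^ (1 / p) ∂P ≤
      (Fintype.card ι : ℝ≥0∞) ^ (1 / q) *
        (ENNReal.ofReal ((2 * (q * γ)) ^ (q * γ / 2) * √2) ^ (1 / q) *
          ⨆ i, (∑ j, b i j) ^ (1 / p)) := by
  refine lintegral_iSup_sum_mul_rpow_le hp hpq hq b (fun i j => by fun_prop) fun i j => ?_
  have hpow : ∀ ω, ENNReal.ofReal (|G ω i j| ^ (p * γ)) ^ (q / p) =
      ENNReal.ofReal (|G ω i j| ^ (q * γ)) := fun ω => by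
    rw [ENNReal.ofReal_rpow_of_nonneg (by positivity) (div_pos (hp.trans_le hpq) hp).le,
      ← rpow_mul (abs_nonneg _)]
    congr 2
    field_simp
  simp_rw [hpow]
  exact lintegral_abs_rpow_le_of_map_eq_gaussianReal (hG i j) (hlaw i j)
    (mul_pos (hp.trans_le hpq) hγ)

lemma ofReal_iSup_sum_rpow {ι κ : Type*} [Fintype ι] [Nonempty ι] [Fintype κ]
    {x : ι → κ → ℝ} (hx : ∀ i j, 0 ≤ x i j) {s : ℝ} (hs : 0 ≤ s) :
    ENNReal.ofReal (⨆ i, (∑ j, x i j) ^ s) = ⨆ i, (∑ j, ENNReal.ofReal (x i j)) ^ s := by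
  rw [ENNReal.ofReal_mono.map_ciSup_of_continuousAt ENNReal.continuous_ofReal.continuousAt
    (Finite.bddAbove_range _)]
  congr 1
  ext i
  rw [← ENNReal.ofReal_rpow_of_nonneg (Finset.sum_nonneg fun j _ => hx i j) hs,
    ENNReal.ofReal_sum_of_nonneg fun j _ => hx i j]

lemma card_rpow_mul_gaussian_moment_rpow_le {m : ℕ} (hm : 2 ≤ m) {p q γ : ℝ} (hp : 1 ≤ p)
    (hγ : 0 < γ) (hq : q * log 2 = p * log m) :
    (m : ℝ≥0∞) ^ (1 / q) * ENNReal.ofReal ((2 * (q * γ)) ^ (q * γ / 2) * √2) ^ (1 / q) ≤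
      ENNReal.ofReal (2 * √2 * (2 * p * γ / log 2) ^ (γ / 2) * log m ^ (γ / 2)) := by
  have hlog2 : 0 < log 2 := log_pos one_lt_two
  have hlogm : log 2 ≤ log m := log_le_log two_pos (by exact_mod_cast hm)
  have hq1 : 1 ≤ q := by nlinarith
  have hq0 : 0 < q := by linarith
  have hm_rpow : (m : ℝ) ^ (1 / q) ≤ 2 := by
    rw [rpow_def_of_pos (by positivity), ← exp_log two_pos, exp_le_exp, mul_one_div,
      div_le_iff₀ hq0]
    nlinarith
  have hsqrt2 : √2 ^ (1 / q) ≤ √2 :=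
    rpow_le_self_of_one_le (one_le_sqrt.2 one_le_two) ((div_le_one hq0).2 hq1)
  have hbase : 2 * (q * γ) = 2 * p * γ / log 2 * log m := by
    rw [div_mul_eq_mul_div, eq_div_iff hlog2.ne']
    linear_combination 2 * γ * hq
  rw [← ENNReal.ofReal_natCast, ENNReal.ofReal_rpow_of_nonneg (by positivity) (by positivity),
    ENNReal.ofReal_rpow_of_nonneg (by positivity) (by positivity),
    ← ENNReal.ofReal_mul (by positivity)]
  refine ENNReal.ofReal_le_ofReal ?_
  calc (m : ℝ) ^ (1 / q) * ((2 * (q * γ)) ^ (q * γ / 2) * √2) ^ (1 / q)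
      = (m : ℝ) ^ (1 / q) * ((2 * (q * γ)) ^ (γ / 2) * √2 ^ (1 / q)) := by
        rw [mul_rpow (by positivity) (by positivity), ← rpow_mul (by positivity),
          show q * γ / 2 * (1 / q) = γ / 2 by field_simp]
    _ ≤ 2 * ((2 * (q * γ)) ^ (γ / 2) * √2) := by gcongr
    _ = 2 * √2 * (2 * p * γ / log 2) ^ (γ / 2) * log m ^ (γ / 2) := by
        rw [hbase, mul_rpow (by positivity) (by positivity)]
        ring

theorem statement15 (γ p : ℝ) (hγ : 0 < γ) (hp : max 1 (1 / γ) ≤ p) :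
    ∃ C : ℝ, 0 < C ∧
      ∀ (m n : ℕ), 2 ≤ m → 1 ≤ n →
      ∀ (Ω : Type) [MeasurableSpace Ω] (P : Measure Ω), IsProbabilityMeasure P →
      ∀ G' : Ω → Fin m → Fin n → ℝ, Measurable G' →
        iIndepFun
          (fun ij : Fin m × Fin n => fun ω => G' ω ij.1 ij.2) P →
        (∀ i j, Measure.map (fun ω => G' ω i j) P = gaussianReal 0 1) →
      ∀ B : Fin m → Fin n → ℝ,
        (∫ ω, ⨆ i, (∑ j, |B i j| ^ p * |G' ω i j| ^ (p * γ)) ^ (1 / p) ∂P) ≤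
          C * (Real.log m) ^ (γ / 2) * ⨆ i, (∑ j, |B i j| ^ p) ^ (1 / p) := by
  have hp1 : 1 ≤ p := (le_max_left _ _).trans hp
  have hp0 : 0 < p := zero_lt_one.trans_le hp1
  refine ⟨2 * √2 * (2 * p * γ / log 2) ^ (γ / 2), by positivity, ?_⟩
  intro m n hm _ Ω _ P _ G' hG' _ hlaw B
  have : Nonempty (Fin m) := ⟨⟨0, by omega⟩⟩
  obtain ⟨q, hq⟩ : ∃ q, q * log 2 = p * log m :=
    ⟨p * log m / log 2, div_mul_cancel₀ _ (log_pos one_lt_two).ne'⟩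
  have hpq : p ≤ q := by
    nlinarith [log_pos one_lt_two, log_le_log two_pos (by exact_mod_cast hm : (2 : ℝ) ≤ m)]
  have hM : 0 ≤ ⨆ i, (∑ j, |B i j| ^ p) ^ (1 / p) := Real.iSup_nonneg fun i => by positivity
  refine integral_le_of_lintegral_ofReal_le (fun ω => Real.iSup_nonneg fun i => by positivity)
    (by positivity) ?_
  calc ∫⁻ ω, ENNReal.ofReal (⨆ i, (∑ j, |B i j| ^ p * |G' ω i j| ^ (p * γ)) ^ (1 / p)) ∂P
      = ∫⁻ ω, ⨆ i, (∑ j, ENNReal.ofReal (|B i j| ^ p) *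
          ENNReal.ofReal (|G' ω i j| ^ (p * γ))) ^ (1 / p) ∂P := by
        refine lintegral_congr fun ω => ?_
        rw [ofReal_iSup_sum_rpow (fun i j => by positivity) (by positivity)]
        simp only [ENNReal.ofReal_mul (rpow_nonneg (abs_nonneg _) _)]
    _ ≤ (m : ℝ≥0∞) ^ (1 / q) * (ENNReal.ofReal ((2 * (q * γ)) ^ (q * γ / 2) * √2) ^ (1 / q) *
          ⨆ i, (∑ j, ENNReal.ofReal (|B i j| ^ p)) ^ (1 / p)) := by
        simpa only [Fintype.card_fin] using lintegral_iSup_sum_mul_abs_gaussian_rpow_le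
          (fun i j => by fun_prop) hlaw _ hp0 hpq (hp1.trans hpq) hγ
    _ ≤ ENNReal.ofReal (2 * √2 * (2 * p * γ / log 2) ^ (γ / 2) * log m ^ (γ / 2)) *
          ENNReal.ofReal (⨆ i, (∑ j, |B i j| ^ p) ^ (1 / p)) := by
        rw [← mul_assoc, ofReal_iSup_sum_rpow (fun i j => by positivity) (by positivity)]
        gcongr
        exact card_rpow_mul_gaussian_moment_rpow_le hm hp1 hγ hq
    _ = _ := (ENNReal.ofReal_mul (by positivity)).symm

end
end
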